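/- arXiv:1811.07787 — 6 statements merged into one kernel-verified Lean document; each statement's English description precedes it below -/
import Mathlib

section
/- Let μ, ν be probability measures on ℝ with finite second moments, Fμ, Fν their cumulative distribution functions and Fμ⁻¹, Fν⁻¹ their quantile functions. There exists a measurable map T : ℝ → ℝ such that the unique W₂-optimal coupling between μ and ν equals (Id,T)#μ if and only if, for every x ∈ ℝ with μ({x}) > 0, the quantile function Fν⁻¹ is constant on the interval (Fμ(x−), Fμ(x)]. In that case T(x) = Fν⁻¹(Fμ(x)) gives the unique optimal transport map. -/
open MeasureTheory ProbabilityTheory Set Filter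
open scoped ENNReal

noncomputable section

/-- π is a coupling of μ and ν (on ℝ). -/
def IsCouplingR (π : Measure (ℝ × ℝ)) (μ ν : Measure ℝ) : Prop :=
  π.map Prod.fst = μ ∧ π.map Prod.snd = ν

/-- quadratic transport cost. -/
def costR (π : Measure (ℝ × ℝ)) : ℝ := ∫ p, (p.2 - p.1) ^ 2 ∂π

/-- squared quadratic Wasserstein distance on ℝ. -/
def W2sqR (μ ν : Measure ℝ) : ℝ := sInf (costR '' {π | IsCouplingR π μ ν})

/-- π is a W₂-optimal coupling. -/
def IsOptimalCouplingR (π : Measure (ℝ × ℝ)) (μ ν : Measure ℝ) : Prop :=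
  IsCouplingR π μ ν ∧ costR π = W2sqR μ ν

/-- the coupling (Id, T)#μ. -/
def givenByMapR (μ : Measure ℝ) (T : ℝ → ℝ) : Measure (ℝ × ℝ) :=
  μ.map (fun x => (x, T x))

/-- cumulative distribution function F_μ(x) = μ((-∞,x]). -/
def Fcdf (μ : Measure ℝ) (x : ℝ) : ℝ := (μ (Set.Iic x)).toReal

/-- left limit F_μ(x-) = μ((-∞,x)). -/
def Fleft (μ : Measure ℝ) (x : ℝ) : ℝ := (μ (Set.Iio x)).toReal

/-- quantile function F_μ⁻¹(u) = inf {x : F_μ(x) ≥ u}. -/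
def Finv (μ : Measure ℝ) (u : ℝ) : ℝ := sInf {x : ℝ | u ≤ Fcdf μ x}

/-- finite second moment. -/
def FiniteSecondMomentR (μ : Measure ℝ) : Prop := Integrable (fun x => x ^ 2) μ

/-- convex order on ℝ. -/
def ConvexOrderR (η ν : Measure ℝ) : Prop :=
  ∀ φ : ℝ → ℝ, ConvexOn ℝ Set.univ φ → Integrable φ η → Integrable φ ν →
    ∫ x, φ x ∂η ≤ ∫ y, φ y ∂ν

/-- martingale coupling between η and ν: disintegrates as η(dz)m(z,dy) with barycenter z. -/
def IsMartingaleCouplingR (π : Measure (ℝ × ℝ)) (η ν : Measure ℝ) : Prop :=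
  IsCouplingR π η ν ∧ ∃ m : Kernel ℝ ℝ, IsMarkovKernel m ∧ π = η.compProd m ∧
    ∀ᵐ z ∂η, ∫ y, y ∂(m z) = z

/-!
Every coupling `π` of `μ` and `ν` obeys the Fréchet bound
`π((s,∞) × (t,∞)) ≤ min (μ(s,∞)) (ν(t,∞))`, with equality for the quantile coupling
`(Fμ⁻¹, Fν⁻¹)#Leb(0,1)`. Writing `x = ∫ (1{s<x} - 1{s<0}) ds` and using Fubini (Hoeffding's
identity), the difference of the costs of two couplings is twice the integral over `(s,t)` of the
difference of their quadrant measures. Hence the quantile coupling is optimal, and any optimal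
coupling has the same quadrant measures almost everywhere, hence everywhere by continuity from the
upper right, hence coincides with it.

The quantile coupling equals `(Id,T)#μ` iff `Fν⁻¹ = T ∘ Fμ⁻¹` a.e. on `(0,1)`. As `Fμ⁻¹ = x` on
`(Fμ(x-), Fμ(x)]`, this makes `Fν⁻¹` a.e. constant there, hence constant, since it is monotone
and `Fν⁻¹ u ≤ y ↔ u ≤ Fν y`. Conversely, off the countably many values `Fμ(x-)`, a point `u` either lies in
such an interval or equals `Fμ(Fμ⁻¹ u)`, so `T = Fν⁻¹ ∘ Fμ` works.
-/

open scoped Topology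

namespace Quantile

section

variable (η : Measure ℝ)

lemma Fcdf_nonneg (x : ℝ) : 0 ≤ Fcdf η x := ENNReal.toReal_nonneg

variable [IsProbabilityMeasure η]

lemma Fcdf_eq_cdf : Fcdf η = cdf η :=
  funext fun x => (cdf_eq_real η x).symm

lemma monotone_Fcdf : Monotone (Fcdf η) :=
  Fcdf_eq_cdf η ▸ monotone_cdf η

lemma Fcdf_le_one (x : ℝ) : Fcdf η x ≤ 1 :=
  Fcdf_eq_cdf η ▸ cdf_le_one η x

lemma measure_Ioi_eq_ofReal (x : ℝ) : η (Ioi x) = ENNReal.ofReal (1 - Fcdf η x) := by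
  rw [← compl_Iic, prob_compl_eq_one_sub measurableSet_Iic, Fcdf_eq_cdf, ← ofReal_cdf,
    ← ENNReal.ofReal_one, ENNReal.ofReal_sub _ (cdf_nonneg η x)]

lemma Fleft_eq_leftLim (x : ℝ) : Fleft η x = Function.leftLim (Fcdf η) x := by
  have h := (cdf η).measure_Iio (tendsto_cdf_atBot η) x
  rw [measure_cdf, sub_zero] at h
  rw [Fleft, h, ENNReal.toReal_ofReal ((cdf_nonneg η (x - 1)).trans
    ((monotone_cdf η).le_leftLim (sub_one_lt x))), Fcdf_eq_cdf]

end

variable {η : Measure ℝ} {u v x : ℝ}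

lemma Finv_of_nonpos (hu : u ≤ 0) : Finv η u = 0 := by
  have : {x | u ≤ Fcdf η x} = univ := eq_univ_of_forall fun x => hu.trans (Fcdf_nonneg η x)
  rw [Finv, this, Real.sInf_of_not_bddBelow not_bddBelow_univ]

variable [IsProbabilityMeasure η]

lemma Finv_of_one_lt (hu : 1 < u) : Finv η u = 0 := by
  have : {x | u ≤ Fcdf η x} = ∅ := eq_empty_of_forall_notMem fun x hx =>
    (hu.trans_le hx).not_ge (Fcdf_le_one η x)
  rw [Finv, this, Real.sInf_empty]

lemma Fcdf_sub_Fleft (x : ℝ) : Fcdf η x - Fleft η x = η.real {x} := by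
  rw [Fcdf, Fleft, ← Iio_union_right, measure_union (by simp) (measurableSet_singleton x),
    ENNReal.toReal_add (measure_ne_top η _) (measure_ne_top η _), measureReal_def]
  ring

lemma Fleft_le_Fcdf (x : ℝ) : Fleft η x ≤ Fcdf η x :=
  ENNReal.toReal_mono (measure_ne_top η _) (measure_mono Iio_subset_Iic_self)

lemma Fleft_lt_Fcdf_iff : Fleft η x < Fcdf η x ↔ 0 < η {x} := by
  rw [← sub_pos, Fcdf_sub_Fleft, measureReal_def, ENNReal.toReal_pos_iff,
    and_iff_left (measure_lt_top η _)]

lemma Fcdf_le_Fleft {y : ℝ} (h : y < x) : Fcdf η y ≤ Fleft η x :=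
  ENNReal.toReal_mono (measure_ne_top η _) (measure_mono (Iic_subset_Iio.2 h))

lemma bddBelow_setOf_le_Fcdf (hu : 0 < u) : BddBelow {x | u ≤ Fcdf η x} := by
  obtain ⟨y, hy⟩ := (((Fcdf_eq_cdf η) ▸ tendsto_cdf_atBot η).eventually_lt_const hu).exists
  exact ⟨y, fun z hz => not_lt.1 fun hzy => (hz.trans (monotone_Fcdf η hzy.le)).not_gt hy⟩

lemma exists_le_Fcdf (hu : u < 1) : ∃ x, u ≤ Fcdf η x :=
  (((Fcdf_eq_cdf η) ▸ tendsto_cdf_atTop η).eventually_const_lt hu).exists.imp fun _ => le_of_lt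

lemma Finv_le (hu : 0 < u) (h : u ≤ Fcdf η x) : Finv η u ≤ x :=
  csInf_le (bddBelow_setOf_le_Fcdf hu) h

lemma le_Fcdf_Finv (hne : ∃ x, u ≤ Fcdf η x) : u ≤ Fcdf η (Finv η u) := by
  have hright : Tendsto (Fcdf η) (𝓝[>] Finv η u) (𝓝 (Fcdf η (Finv η u))) := by
    rw [Fcdf_eq_cdf]
    exact ((cdf η).right_continuous _).mono Ioi_subset_Ici_self
  refine ge_of_tendsto hright (eventually_nhdsWithin_of_forall fun y hy => ?_)
  obtain ⟨z, hz, hzy⟩ := exists_lt_of_csInf_lt hne hy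
  exact le_trans hz (monotone_Fcdf η hzy.le)

lemma Finv_le_iff (hu : u ∈ Ioo 0 1) : Finv η u ≤ x ↔ u ≤ Fcdf η x :=
  ⟨fun h => (le_Fcdf_Finv (exists_le_Fcdf hu.2)).trans (monotone_Fcdf η h), Finv_le hu.1⟩

lemma lt_Finv_iff (hu : u ∈ Ioo 0 1) : x < Finv η u ↔ Fcdf η x < u :=
  lt_iff_lt_of_le_iff_le (Finv_le_iff hu)

lemma Finv_le_Finv (hu : 0 < u) (huv : u ≤ v) (hv : ∃ x, v ≤ Fcdf η x) : Finv η u ≤ Finv η v :=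
  csInf_le_csInf (bddBelow_setOf_le_Fcdf hu) hv fun _ hx => huv.trans hx

lemma monotoneOn_Finv : MonotoneOn (Finv η) (Ioo 0 1) := fun _ hu _ hv huv =>
  Finv_le_Finv hu.1 huv (exists_le_Fcdf hv.2)

lemma measurable_Finv : Measurable (Finv η) := by
  have hmono : Monotone ((Ioo (0 : ℝ) 1).domRestrict (Finv η)) := fun a b hab =>
    monotoneOn_Finv a.2 b.2 hab
  refine measurable_of_restrict_of_restrict_compl measurableSet_Ioo hmono.measurable ?_
  have : (Ioo 0 1)ᶜ.domRestrict (Finv η) =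
      (Ioo 0 1)ᶜ.domRestrict (({1} : Set ℝ).indicator fun _ => Finv η 1) := by
    ext ⟨u, hu⟩
    simp only [domRestrict_apply, indicator, mem_singleton_iff]
    split_ifs with h1
    · rw [h1]
    rcases le_or_gt u 0 with h0 | h0
    · exact Finv_of_nonpos h0
    · exact Finv_of_one_lt ((not_lt.1 fun h => hu ⟨h0, h⟩).lt_of_ne' h1)
  rw [this]
  exact (measurable_const.indicator (measurableSet_singleton 1)).comp measurable_subtype_coe

lemma Fleft_Finv_le (hu : u ∈ Ioo 0 1) : Fleft η (Finv η u) ≤ u := by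
  rw [Fleft_eq_leftLim]
  exact le_of_tendsto ((monotone_Fcdf η).tendsto_leftLim _)
    (eventually_nhdsWithin_of_forall fun y hy => ((lt_Finv_iff hu).1 hy).le)

lemma Finv_eq_of_ae_eq {a b c : ℝ} (ha : 0 ≤ a) (hb : b ≤ 1)
    (h : ∀ᵐ u ∂volume.restrict (Ioo a b), Finv η u = c) (hv : v ∈ Ioc a b) : Finv η v = c := by
  have hwit (l : ℝ) (hal : a ≤ l) (hlv : l < v) : ∃ w ∈ Ioo l v, Finv η w = c :=
    Measure.exists_mem_of_measure_ne_zero_of_ae (by simp [hlv])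
      (ae_restrict_of_ae_restrict_of_subset (Ioo_subset_Ioo hal hv.2) h)
  have hvc : v ≤ Fcdf η c := by
    by_contra! hlt
    obtain ⟨w, hw, hwc⟩ := hwit _ (le_max_left a (Fcdf η c)) (max_lt hv.1 hlt)
    have hw_le := hwc ▸ le_Fcdf_Finv (η := η) (exists_le_Fcdf (hw.2.trans_le (hv.2.trans hb)))
    linarith [le_max_right a (Fcdf η c), hw.1]
  obtain ⟨w, hw, hwc⟩ := hwit a le_rfl hv.1
  exact (Finv_le (ha.trans_lt hv.1) hvc).antisymm
    (hwc ▸ Finv_le_Finv (ha.trans_lt hw.1) hw.2.le ⟨c, hvc⟩)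

lemma Finv_eq_of_mem_Ioc (hu : u ∈ Ioc (Fleft η x) (Fcdf η x)) : Finv η u = x := by
  have hu0 : 0 < u := ENNReal.toReal_nonneg.trans_lt hu.1
  refine (Finv_le hu0 hu.2).antisymm (le_csInf ⟨x, hu.2⟩ fun z hz => not_lt.1 fun hzx => ?_)
  exact (hu.1.trans_le hz).not_ge (Fcdf_le_Fleft hzx)

-- The open interval avoids the junk value `Finv η 1`, which may be `sInf ∅ = 0`.
def lebUnit : Measure ℝ := volume.restrict (Ioo 0 1)

instance : IsProbabilityMeasure lebUnit :=
  ⟨by rw [lebUnit, Measure.restrict_apply_univ, Real.volume_Ioo, sub_zero, ENNReal.ofReal_one]⟩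

lemma lebUnit_congr {s t : Set ℝ} (h : ∀ u ∈ Ioo (0 : ℝ) 1, u ∈ s ↔ u ∈ t) :
    lebUnit s = lebUnit t := by
  rw [lebUnit, Measure.restrict_apply' measurableSet_Ioo, Measure.restrict_apply' measurableSet_Ioo]
  congr 1
  ext u
  exact ⟨fun hu => ⟨(h u hu.2).1 hu.1, hu.2⟩, fun hu => ⟨(h u hu.2).2 hu.1, hu.2⟩⟩

lemma lebUnit_Ioi {a : ℝ} (ha : 0 ≤ a) : lebUnit (Ioi a) = ENNReal.ofReal (1 - a) := by
  rw [lebUnit, Measure.restrict_apply' measurableSet_Ioo, Ioi_inter_Ioo, Real.volume_Ioo,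
    max_eq_left ha]

lemma lebUnit_Iic {a : ℝ} (ha : 0 ≤ a) (ha1 : a ≤ 1) : lebUnit (Iic a) = ENNReal.ofReal a := by
  rw [← compl_Ioi, prob_compl_eq_one_sub measurableSet_Ioi, lebUnit_Ioi ha,
    ← ENNReal.ofReal_one, ← ENNReal.ofReal_sub _ (sub_nonneg.2 ha1), sub_sub_cancel]

lemma map_Finv_lebUnit : lebUnit.map (Finv η) = η := by
  refine Measure.ext_of_Iic _ _ fun x => ?_
  rw [Measure.map_apply measurable_Finv measurableSet_Iic,
    lebUnit_congr (s := Finv η ⁻¹' Iic x) (t := Iic (Fcdf η x)) fun u hu => Finv_le_iff hu,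
    lebUnit_Iic (Fcdf_nonneg η x) (Fcdf_le_one η x), Fcdf_eq_cdf, ofReal_cdf]

end Quantile

open Quantile

section Quadrant

def quadrant (q : ℝ × ℝ) : Set (ℝ × ℝ) := Ioi q.1 ×ˢ Ioi q.2

lemma measurableSet_quadrant (q : ℝ × ℝ) : MeasurableSet (quadrant q) :=
  measurableSet_Ioi.prod measurableSet_Ioi

lemma iUnion_Ioi_add_inv (a : ℝ) : ⋃ n : ℕ, Ioi (a + ((n : ℝ) + 1)⁻¹) = Ioi a := by
  refine Subset.antisymm (iUnion_subset fun n => Ioi_subset_Ioi (le_add_of_nonneg_right (by positivity)))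
    fun x hx => mem_iUnion.2 ?_
  obtain ⟨n, hn⟩ := exists_nat_one_div_lt (sub_pos.2 (mem_Ioi.1 hx))
  exact ⟨n, by rw [mem_Ioi, ← one_div]; linarith⟩

lemma monotone_Ioi_add_inv (a : ℝ) : Monotone fun n : ℕ => Ioi (a + ((n : ℝ) + 1)⁻¹) :=
  fun m n hmn => Ioi_subset_Ioi (by gcongr)

lemma iUnion_quadrant_add_inv (q : ℝ × ℝ) :
    ⋃ n : ℕ, quadrant (q.1 + ((n : ℝ) + 1)⁻¹, q.2 + ((n : ℝ) + 1)⁻¹) = quadrant q := by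
  simp only [quadrant]
  rw [iUnion_prod_of_monotone (monotone_Ioi_add_inv _) (monotone_Ioi_add_inv _),
    iUnion_Ioi_add_inv, iUnion_Ioi_add_inv]

variable {ρ σ : Measure (ℝ × ℝ)}

lemma measure_quadrant_le_of_ae (h : ∀ᵐ q ∂volume, ρ (quadrant q) ≤ σ (quadrant q))
    (q : ℝ × ℝ) : ρ (quadrant q) ≤ σ (quadrant q) := by
  have hmono : Monotone fun n : ℕ => quadrant (q.1 + ((n : ℝ) + 1)⁻¹, q.2 + ((n : ℝ) + 1)⁻¹) :=
    fun m n hmn => prod_mono (monotone_Ioi_add_inv _ hmn) (monotone_Ioi_add_inv _ hmn)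
  conv_lhs => rw [← iUnion_quadrant_add_inv, hmono.measure_iUnion]
  refine iSup_le fun n => ?_
  set ε : ℝ := ((n : ℝ) + 1)⁻¹
  have hε : 0 < ε := by positivity
  have hbox : volume (Ioo q.1 (q.1 + ε) ×ˢ Ioo q.2 (q.2 + ε)) ≠ 0 := by
    simp [Measure.volume_eq_prod, Measure.prod_prod, hε]
  obtain ⟨r, hr, hρσ⟩ := Measure.exists_mem_of_measure_ne_zero_of_ae hbox (ae_restrict_of_ae h)
  calc ρ (quadrant (q.1 + ε, q.2 + ε)) ≤ ρ (quadrant r) :=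
        measure_mono (prod_mono (Ioi_subset_Ioi hr.1.2.le) (Ioi_subset_Ioi hr.2.2.le))
    _ ≤ σ (quadrant r) := hρσ
    _ ≤ σ (quadrant q) :=
        measure_mono (prod_mono (Ioi_subset_Ioi hr.1.1.le) (Ioi_subset_Ioi hr.2.1.le))

lemma isPiSystem_range_quadrant : IsPiSystem (range quadrant) := by
  rintro _ ⟨p, rfl⟩ _ ⟨q, rfl⟩ -
  exact ⟨p ⊔ q, by simp [quadrant, prod_inter_prod, Ioi_inter_Ioi]⟩

lemma generateFrom_range_quadrant :
    MeasurableSpace.generateFrom (range quadrant) = (inferInstance : MeasurableSpace (ℝ × ℝ)) := by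
  have hspan : IsCountablySpanning (range (Ioi : ℝ → Set ℝ)) :=
    ⟨fun n : ℕ => Ioi (-(n : ℝ)), fun _ => mem_range_self _, eq_univ_of_forall fun x =>
      mem_iUnion.2 ((exists_nat_gt (-x)).imp fun n hn => by rw [mem_Ioi]; linarith)⟩
  have hquad : range quadrant = image2 (· ×ˢ ·) (range (Ioi : ℝ → Set ℝ)) (range Ioi) := by
    rw [image2_range]
    rfl
  rw [hquad, ← generateFrom_prod_eq hspan hspan, ← borel_eq_generateFrom_Ioi]

lemma ext_of_ae_measure_quadrant [IsProbabilityMeasure ρ] [IsProbabilityMeasure σ]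
    (h : ∀ᵐ q ∂volume, ρ (quadrant q) = σ (quadrant q)) : ρ = σ := by
  refine ext_of_generate_finite _ generateFrom_range_quadrant.symm isPiSystem_range_quadrant
    ?_ (by simp)
  rintro _ ⟨q, rfl⟩
  exact (measure_quadrant_le_of_ae (h.mono fun _ => le_of_eq) q).antisymm
    (measure_quadrant_le_of_ae (h.mono fun _ => ge_of_eq) q)

end Quadrant

section Coupling

variable {μ ν : Measure ℝ} {π : Measure (ℝ × ℝ)}

lemma IsCouplingR.fst_preimage (hπ : IsCouplingR π μ ν) {s : Set ℝ} (hs : MeasurableSet s) :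
    π (Prod.fst ⁻¹' s) = μ s := by
  rw [← hπ.1, Measure.map_apply measurable_fst hs]

lemma IsCouplingR.snd_preimage (hπ : IsCouplingR π μ ν) {s : Set ℝ} (hs : MeasurableSet s) :
    π (Prod.snd ⁻¹' s) = ν s := by
  rw [← hπ.2, Measure.map_apply measurable_snd hs]

lemma IsCouplingR.isProbabilityMeasure [IsProbabilityMeasure μ] (hπ : IsCouplingR π μ ν) :
    IsProbabilityMeasure π :=
  ⟨by rw [← preimage_univ, hπ.fst_preimage MeasurableSet.univ, measure_univ]⟩

lemma IsCouplingR.measure_quadrant_le (hπ : IsCouplingR π μ ν) (q : ℝ × ℝ) :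
    π (quadrant q) ≤ min (μ (Ioi q.1)) (ν (Ioi q.2)) :=
  le_min ((measure_mono fun _ hp => hp.1).trans (hπ.fst_preimage measurableSet_Ioi).le)
    ((measure_mono fun _ hp => hp.2).trans (hπ.snd_preimage measurableSet_Ioi).le)

variable (μ ν) [IsProbabilityMeasure μ] [IsProbabilityMeasure ν]

def quantileCoupling : Measure (ℝ × ℝ) := lebUnit.map fun u => (Finv μ u, Finv ν u)

lemma measurable_Finv_prodMk_Finv : Measurable fun u => (Finv μ u, Finv ν u) :=
  measurable_Finv.prodMk measurable_Finv

lemma isCouplingR_quantileCoupling : IsCouplingR (quantileCoupling μ ν) μ ν := by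
  constructor <;>
  rw [quantileCoupling, Measure.map_map (by fun_prop) (measurable_Finv_prodMk_Finv μ ν)] <;>
  exact map_Finv_lebUnit

lemma quantileCoupling_quadrant (q : ℝ × ℝ) :
    quantileCoupling μ ν (quadrant q) = min (μ (Ioi q.1)) (ν (Ioi q.2)) := by
  rw [quantileCoupling, Measure.map_apply (measurable_Finv_prodMk_Finv μ ν)
    (measurableSet_quadrant q),
    lebUnit_congr (t := Ioi (max (Fcdf μ q.1) (Fcdf ν q.2))) fun u hu => by
      simp [quadrant, lt_Finv_iff hu],
    lebUnit_Ioi (le_max_of_le_left (Fcdf_nonneg μ _)), measure_Ioi_eq_ofReal, measure_Ioi_eq_ofReal, sub_sup,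
    ENNReal.ofReal_min]

variable {μ ν}

lemma givenByMapR_eq_map {T : ℝ → ℝ} (hT : Measurable T) :
    givenByMapR μ T = lebUnit.map fun u => (Finv μ u, T (Finv μ u)) := by
  conv_lhs => rw [givenByMapR, ← map_Finv_lebUnit (η := μ)]
  exact Measure.map_map (by fun_prop) measurable_Finv

lemma quantileCoupling_eq_givenByMapR_iff {T : ℝ → ℝ} (hT : Measurable T) :
    quantileCoupling μ ν = givenByMapR μ T ↔ Finv ν =ᵐ[lebUnit] T ∘ Finv μ := by
  refine ⟨fun h => ?_, fun h => ?_⟩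
  · have hgraph : MeasurableSet {p : ℝ × ℝ | p.2 = T p.1} :=
      measurableSet_eq_fun measurable_snd (hT.comp measurable_fst)
    have : ∀ᵐ p ∂givenByMapR μ T, p.2 = T p.1 :=
      (ae_map_iff (by fun_prop) hgraph).2 (ae_of_all _ fun _ => rfl)
    rwa [← h, quantileCoupling,
      ae_map_iff (measurable_Finv_prodMk_Finv μ ν).aemeasurable hgraph] at this
  · rw [givenByMapR_eq_map hT, quantileCoupling]
    exact Measure.map_congr (h.mono fun u hu => by simp [hu])

end Coupling

section Hoeffding

def layer (s x : ℝ) : ℝ := (if s < x then 1 else 0) - (if s < 0 then 1 else 0)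

lemma layer_eq_indicator (s x : ℝ) :
    layer s x = (Ico 0 x).indicator 1 s - (Ico x 0).indicator 1 s := by
  simp only [layer, indicator, mem_Ico, Pi.one_apply]
  split_ifs <;> grind

lemma abs_layer_eq_indicator (s x : ℝ) :
    |layer s x| = (Ico 0 x).indicator 1 s + (Ico x 0).indicator 1 s := by
  simp only [layer, indicator, mem_Ico, Pi.one_apply]
  split_ifs <;> grind

lemma integrable_indicator_Ico_one (a b : ℝ) : Integrable ((Ico a b).indicator (1 : ℝ → ℝ)) :=
  (integrable_indicator_iff measurableSet_Ico).2 (integrableOn_const (by simp))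

lemma integrable_layer (x : ℝ) : Integrable fun s => layer s x := by
  simp_rw [layer_eq_indicator]
  exact (integrable_indicator_Ico_one 0 x).sub (integrable_indicator_Ico_one x 0)

lemma integral_layer (x : ℝ) : ∫ s, layer s x = x := by
  simp_rw [layer_eq_indicator]
  rw [integral_sub (integrable_indicator_Ico_one 0 x) (integrable_indicator_Ico_one x 0),
    integral_indicator_one measurableSet_Ico, integral_indicator_one measurableSet_Ico,
    Real.volume_real_Ico, Real.volume_real_Ico]
  rcases le_total 0 x with h | h <;> simp [h]

lemma integral_abs_layer (x : ℝ) : ∫ s, |layer s x| = |x| := by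
  simp_rw [abs_layer_eq_indicator]
  rw [integral_add (integrable_indicator_Ico_one 0 x) (integrable_indicator_Ico_one x 0),
    integral_indicator_one measurableSet_Ico, integral_indicator_one measurableSet_Ico,
    Real.volume_real_Ico, Real.volume_real_Ico]
  rcases le_total 0 x with h | h <;> simp [h, abs_of_nonneg, abs_of_nonpos]

lemma measurable_layer : Measurable fun q : ℝ × ℝ => layer q.1 q.2 :=
  (Measurable.ite (measurableSet_lt measurable_fst measurable_snd) measurable_const
    measurable_const).sub
    (Measurable.ite (measurableSet_lt measurable_fst measurable_const) measurable_const
      measurable_const)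

variable {π : Measure (ℝ × ℝ)}

lemma integrable_layer_mul_layer (h : Integrable (fun p : ℝ × ℝ => p.1 * p.2) π) :
    Integrable (Function.uncurry fun (p q : ℝ × ℝ) => layer q.1 p.1 * layer q.2 p.2)
      (π.prod volume) := by
  have hmeas : AEStronglyMeasurable
      (Function.uncurry fun (p q : ℝ × ℝ) => layer q.1 p.1 * layer q.2 p.2) (π.prod volume) :=
    ((measurable_layer.comp (measurable_snd.fst.prodMk measurable_fst.fst)).mul
      (measurable_layer.comp (measurable_snd.snd.prodMk measurable_fst.snd))).aestronglyMeasurable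
  refine (integrable_prod_iff hmeas).2 ⟨ae_of_all _ fun p => ?_, ?_⟩
  · rw [Measure.volume_eq_prod]
    exact (integrable_layer p.1).mul_prod (integrable_layer p.2)
  · refine h.abs.congr (ae_of_all _ fun p => ?_)
    simp only [Function.uncurry_apply_pair, norm_mul, Real.norm_eq_abs, Measure.volume_eq_prod]
    rw [integral_prod_mul (fun s => |layer s p.1|) (fun t => |layer t p.2|), integral_abs_layer,
      integral_abs_layer, abs_mul]

lemma integral_mul_eq_integral_integral_layer [SFinite π]
    (h : Integrable (fun p : ℝ × ℝ => p.1 * p.2) π) :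
    ∫ p, p.1 * p.2 ∂π = ∫ q : ℝ × ℝ, ∫ p, layer q.1 p.1 * layer q.2 p.2 ∂π := by
  have hxy (p : ℝ × ℝ) : p.1 * p.2 = ∫ q : ℝ × ℝ, layer q.1 p.1 * layer q.2 p.2 := by
    rw [Measure.volume_eq_prod, integral_prod_mul (fun s => layer s p.1) (fun t => layer t p.2),
      integral_layer, integral_layer]
  simp_rw [hxy]
  exact integral_integral_swap (integrable_layer_mul_layer h)

end Hoeffding

section Cost

variable {μ ν : Measure ℝ} {π π' : Measure (ℝ × ℝ)}

lemma IsCouplingR.integrable_mul (hπ : IsCouplingR π μ ν) (hμ : FiniteSecondMomentR μ)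
    (hν : FiniteSecondMomentR ν) : Integrable (fun p : ℝ × ℝ => p.1 * p.2) π := by
  have h1 : MemLp (fun p : ℝ × ℝ => p.1) 2 π :=
    (memLp_two_iff_integrable_sq measurable_fst.aestronglyMeasurable).2
      ((hπ.1 ▸ hμ).comp_measurable measurable_fst)
  have h2 : MemLp (fun p : ℝ × ℝ => p.2) 2 π :=
    (memLp_two_iff_integrable_sq measurable_snd.aestronglyMeasurable).2
      ((hπ.2 ▸ hν).comp_measurable measurable_snd)
  exact h1.integrable_mul h2

lemma IsCouplingR.costR_eq (hπ : IsCouplingR π μ ν) (hμ : FiniteSecondMomentR μ)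
    (hν : FiniteSecondMomentR ν) :
    costR π = ∫ x, x ^ 2 ∂μ + ∫ y, y ^ 2 ∂ν - 2 * ∫ p, p.1 * p.2 ∂π := by
  have h1 : Integrable (fun p : ℝ × ℝ => p.1 ^ 2) π := (hπ.1 ▸ hμ).comp_measurable measurable_fst
  have h2 : Integrable (fun p : ℝ × ℝ => p.2 ^ 2) π := (hπ.2 ▸ hν).comp_measurable measurable_snd
  have h12 : Integrable (fun p : ℝ × ℝ => p.1 ^ 2 + p.2 ^ 2) π := h1.add h2
  have h3 : Integrable (fun p : ℝ × ℝ => 2 * (p.1 * p.2)) π := (hπ.integrable_mul hμ hν).const_mul 2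
  have e1 : ∫ p, p.1 ^ 2 ∂π = ∫ x, x ^ 2 ∂μ := by
    rw [← hπ.1, integral_map measurable_fst.aemeasurable (by fun_prop)]
  have e2 : ∫ p, p.2 ^ 2 ∂π = ∫ y, y ^ 2 ∂ν := by
    rw [← hπ.2, integral_map measurable_snd.aemeasurable (by fun_prop)]
  have hsq (p : ℝ × ℝ) : (p.2 - p.1) ^ 2 = p.1 ^ 2 + p.2 ^ 2 - 2 * (p.1 * p.2) := by ring
  simp_rw [costR, hsq]
  rw [integral_sub h12 h3, integral_add h1 h2,
    integral_const_mul, e1, e2]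

variable [IsProbabilityMeasure μ]

lemma IsCouplingR.integral_layer_mul_layer (hπ : IsCouplingR π μ ν) (q : ℝ × ℝ) :
    ∫ p, layer q.1 p.1 * layer q.2 p.2 ∂π =
      π.real (quadrant q) - (if q.2 < 0 then 1 else 0) * μ.real (Ioi q.1)
        - (if q.1 < 0 then 1 else 0) * ν.real (Ioi q.2)
        + (if q.1 < 0 then 1 else 0) * (if q.2 < 0 then 1 else 0) := by
  have := hπ.isProbabilityMeasure
  set a : ℝ := if q.1 < 0 then 1 else 0
  set b : ℝ := if q.2 < 0 then 1 else 0
  have hfst : MeasurableSet (Prod.fst ⁻¹' Ioi q.1 : Set (ℝ × ℝ)) := measurable_fst measurableSet_Ioi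
  have hsnd : MeasurableSet (Prod.snd ⁻¹' Ioi q.2 : Set (ℝ × ℝ)) := measurable_snd measurableSet_Ioi
  have hexp : (fun p : ℝ × ℝ => layer q.1 p.1 * layer q.2 p.2) = fun p =>
      (quadrant q).indicator 1 p - b * (Prod.fst ⁻¹' Ioi q.1).indicator 1 p
        - a * (Prod.snd ⁻¹' Ioi q.2).indicator 1 p + a * b := by
    ext p
    simp only [layer, a, b, indicator, quadrant, mem_prod, mem_preimage, mem_Ioi, Pi.one_apply]
    split_ifs <;> grind
  have i0 : Integrable (fun p => (quadrant q).indicator 1 p) π :=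
    (integrable_const (1 : ℝ)).indicator (measurableSet_quadrant q)
  have i1 : Integrable (fun p => b * (Prod.fst ⁻¹' Ioi q.1).indicator 1 p) π :=
    ((integrable_const (1 : ℝ)).indicator hfst).const_mul b
  have i2 : Integrable (fun p => a * (Prod.snd ⁻¹' Ioi q.2).indicator 1 p) π :=
    ((integrable_const (1 : ℝ)).indicator hsnd).const_mul a
  have i01 : Integrable (fun p => (quadrant q).indicator 1 p
      - b * (Prod.fst ⁻¹' Ioi q.1).indicator 1 p) π := i0.sub i1
  have i012 : Integrable (fun p => (quadrant q).indicator 1 p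
      - b * (Prod.fst ⁻¹' Ioi q.1).indicator 1 p - a * (Prod.snd ⁻¹' Ioi q.2).indicator 1 p) π :=
    i01.sub i2
  rw [hexp, integral_add i012 (integrable_const _), integral_sub i01 i2,
    integral_sub i0 i1, integral_const_mul, integral_const_mul,
    integral_indicator_one (measurableSet_quadrant q), integral_indicator_one hfst,
    integral_indicator_one hsnd, integral_const, probReal_univ, one_smul]
  simp only [measureReal_def, hπ.fst_preimage measurableSet_Ioi, hπ.snd_preimage measurableSet_Ioi]

lemma IsCouplingR.integrable_integral_layer_mul_layer (hπ : IsCouplingR π μ ν)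
    (hμ : FiniteSecondMomentR μ) (hν : FiniteSecondMomentR ν) :
    Integrable fun q : ℝ × ℝ => ∫ p, layer q.1 p.1 * layer q.2 p.2 ∂π :=
  have := hπ.isProbabilityMeasure
  (integrable_layer_mul_layer (hπ.integrable_mul hμ hν)).integral_prod_right

lemma IsCouplingR.measureReal_quadrant_sub (hπ : IsCouplingR π μ ν) (hπ' : IsCouplingR π' μ ν)
    (q : ℝ × ℝ) : π.real (quadrant q) - π'.real (quadrant q) =
      ∫ p, layer q.1 p.1 * layer q.2 p.2 ∂π - ∫ p, layer q.1 p.1 * layer q.2 p.2 ∂π' := by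
  rw [hπ.integral_layer_mul_layer, hπ'.integral_layer_mul_layer]
  ring

lemma IsCouplingR.integrable_measureReal_quadrant_sub (hπ : IsCouplingR π μ ν)
    (hπ' : IsCouplingR π' μ ν) (hμ : FiniteSecondMomentR μ) (hν : FiniteSecondMomentR ν) :
    Integrable fun q => π.real (quadrant q) - π'.real (quadrant q) := by
  simp_rw [hπ.measureReal_quadrant_sub hπ']
  exact (hπ.integrable_integral_layer_mul_layer hμ hν).sub
    (hπ'.integrable_integral_layer_mul_layer hμ hν)

lemma IsCouplingR.costR_sub_costR (hπ : IsCouplingR π μ ν) (hπ' : IsCouplingR π' μ ν)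
    (hμ : FiniteSecondMomentR μ) (hν : FiniteSecondMomentR ν) :
    costR π - costR π' = 2 * ∫ q, (π'.real (quadrant q) - π.real (quadrant q)) := by
  have := hπ.isProbabilityMeasure
  have := hπ'.isProbabilityMeasure
  simp_rw [hπ'.measureReal_quadrant_sub hπ]
  rw [integral_sub (hπ'.integrable_integral_layer_mul_layer hμ hν)
      (hπ.integrable_integral_layer_mul_layer hμ hν),
    ← integral_mul_eq_integral_integral_layer (hπ'.integrable_mul hμ hν),
    ← integral_mul_eq_integral_integral_layer (hπ.integrable_mul hμ hν),
    hπ.costR_eq hμ hν, hπ'.costR_eq hμ hν]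
  ring

end Cost

section Optimal

variable {μ ν : Measure ℝ} [IsProbabilityMeasure μ] [IsProbabilityMeasure ν]
  {π : Measure (ℝ × ℝ)}

lemma IsCouplingR.measureReal_quadrant_le (hπ : IsCouplingR π μ ν) (q : ℝ × ℝ) :
    π.real (quadrant q) ≤ (quantileCoupling μ ν).real (quadrant q) := by
  rw [measureReal_def, measureReal_def, quantileCoupling_quadrant]
  exact ENNReal.toReal_mono ((min_le_left _ _).trans_lt (measure_lt_top μ _)).ne
    (hπ.measure_quadrant_le q)

lemma IsCouplingR.costR_quantileCoupling_le (hπ : IsCouplingR π μ ν) (hμ : FiniteSecondMomentR μ)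
    (hν : FiniteSecondMomentR ν) : costR (quantileCoupling μ ν) ≤ costR π := by
  have := hπ.costR_sub_costR (isCouplingR_quantileCoupling μ ν) hμ hν
  have := integral_nonneg (μ := volume) fun q => sub_nonneg.2 (hπ.measureReal_quadrant_le q)
  linarith

lemma W2sqR_eq_costR_quantileCoupling (hμ : FiniteSecondMomentR μ) (hν : FiniteSecondMomentR ν) :
    W2sqR μ ν = costR (quantileCoupling μ ν) :=
  IsLeast.csInf_eq ⟨⟨_, isCouplingR_quantileCoupling μ ν, rfl⟩, by
    rintro _ ⟨π, hπ, rfl⟩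
    exact hπ.costR_quantileCoupling_le hμ hν⟩

lemma IsCouplingR.eq_quantileCoupling_of_costR_le (hπ : IsCouplingR π μ ν)
    (hμ : FiniteSecondMomentR μ) (hν : FiniteSecondMomentR ν)
    (hcost : costR π ≤ costR (quantileCoupling μ ν)) : π = quantileCoupling μ ν := by
  have hqc := isCouplingR_quantileCoupling μ ν
  have := hπ.isProbabilityMeasure
  have := hqc.isProbabilityMeasure
  have hzero : ∫ q, ((quantileCoupling μ ν).real (quadrant q) - π.real (quadrant q)) = 0 := by
    have := hπ.costR_sub_costR hqc hμ hν
    have := integral_nonneg (μ := volume) fun q => sub_nonneg.2 (hπ.measureReal_quadrant_le q)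
    linarith
  rw [integral_eq_zero_iff_of_nonneg (fun q => sub_nonneg.2 (hπ.measureReal_quadrant_le q))
    (hqc.integrable_measureReal_quadrant_sub hπ hμ hν)] at hzero
  refine ext_of_ae_measure_quadrant (hzero.mono fun q hq => ?_)
  exact (ENNReal.toReal_eq_toReal_iff' (measure_ne_top _ _) (measure_ne_top _ _)).1
    (sub_eq_zero.1 hq).symm

theorem setOf_isOptimalCouplingR_eq (hμ : FiniteSecondMomentR μ) (hν : FiniteSecondMomentR ν) :
    {π | IsOptimalCouplingR π μ ν} = {quantileCoupling μ ν} := by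
  ext π
  rw [mem_singleton_iff]
  change IsOptimalCouplingR π μ ν ↔ _
  rw [IsOptimalCouplingR, W2sqR_eq_costR_quantileCoupling hμ hν]
  refine ⟨fun ⟨hπ, hcost⟩ => hπ.eq_quantileCoupling_of_costR_le hμ hν hcost.le, ?_⟩
  rintro rfl
  exact ⟨isCouplingR_quantileCoupling μ ν, rfl⟩

end Optimal

section Atoms

def QuantileFlatOnAtoms (μ ν : Measure ℝ) : Prop :=
  ∀ x : ℝ, 0 < μ {x} → ∀ u ∈ Ioc (Fleft μ x) (Fcdf μ x), Finv ν u = Finv ν (Fcdf μ x)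

variable {μ ν : Measure ℝ} [IsProbabilityMeasure μ]

lemma ae_Finv_eq_Finv_Fcdf_Finv (hflat : QuantileFlatOnAtoms μ ν) :
    Finv ν =ᵐ[lebUnit] (fun x => Finv ν (Fcdf μ x)) ∘ Finv μ := by
  have hcount : (Fleft μ '' {x | Fleft μ x ≠ Fcdf μ x}).Countable := by
    refine Countable.image ?_ _
    simp_rw [Fleft_eq_leftLim, Fcdf_eq_cdf]
    exact (cdf μ).countable_leftLim_ne
  filter_upwards [ae_restrict_of_ae (hcount.ae_notMem volume), ae_restrict_mem measurableSet_Ioo]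
    with u hu hu01
  have hux : u ≤ Fcdf μ (Finv μ u) := le_Fcdf_Finv (exists_le_Fcdf hu01.2)
  rcases (Fleft_le_Fcdf (η := μ) (Finv μ u)).eq_or_lt with heq | hlt
  · exact congrArg (Finv ν) (hux.antisymm (heq ▸ Fleft_Finv_le hu01))
  · exact hflat _ (Fleft_lt_Fcdf_iff.1 hlt) u
      ⟨(Fleft_Finv_le hu01).lt_of_ne fun h => hu ⟨_, hlt.ne, h⟩, hux⟩

variable [IsProbabilityMeasure ν]

lemma quantileFlatOnAtoms_of_ae_eq {T : ℝ → ℝ} (h : Finv ν =ᵐ[lebUnit] T ∘ Finv μ) :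
    QuantileFlatOnAtoms μ ν := by
  intro x hx u hu
  have hsub : Ioo (Fleft μ x) (Fcdf μ x) ⊆ Ioo 0 1 :=
    Ioo_subset_Ioo ENNReal.toReal_nonneg (Fcdf_le_one μ x)
  have hflat : ∀ᵐ v ∂volume.restrict (Ioo (Fleft μ x) (Fcdf μ x)), Finv ν v = T x := by
    filter_upwards [ae_restrict_of_ae_restrict_of_subset hsub h, ae_restrict_mem measurableSet_Ioo]
      with v hv hmem
    rw [hv, Function.comp_apply, Finv_eq_of_mem_Ioc (Ioo_subset_Ioc_self hmem)]
  rw [Finv_eq_of_ae_eq ENNReal.toReal_nonneg (Fcdf_le_one μ x) hflat hu,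
    Finv_eq_of_ae_eq ENNReal.toReal_nonneg (Fcdf_le_one μ x) hflat
      ⟨Fleft_lt_Fcdf_iff.2 hx, le_rfl⟩]

end Atoms

/-- Existence of an optimal transport map in dimension 1: it holds iff Fν⁻¹ is constant on
(Fμ(x-), Fμ(x)] at every atom x of μ, and then T = Fν⁻¹ ∘ Fμ. -/
theorem stmt2 (μ ν : Measure ℝ) [IsProbabilityMeasure μ] [IsProbabilityMeasure ν]
    (hμ : FiniteSecondMomentR μ) (hν : FiniteSecondMomentR ν) :
    ((∃ T : ℝ → ℝ, Measurable T ∧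
        {π | IsOptimalCouplingR π μ ν} = {givenByMapR μ T}) ↔
      (∀ x : ℝ, 0 < μ {x} →
        ∀ u ∈ Set.Ioc (Fleft μ x) (Fcdf μ x), Finv ν u = Finv ν (Fcdf μ x))) ∧
    ((∀ x : ℝ, 0 < μ {x} →
        ∀ u ∈ Set.Ioc (Fleft μ x) (Fcdf μ x), Finv ν u = Finv ν (Fcdf μ x)) →
      {π | IsOptimalCouplingR π μ ν} = {givenByMapR μ (fun x => Finv ν (Fcdf μ x))}) := by
  have hT₀ : Measurable fun x => Finv ν (Fcdf μ x) :=
    measurable_Finv.comp (monotone_Fcdf μ).measurable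
  have hsuff (hflat : QuantileFlatOnAtoms μ ν) :
      {π | IsOptimalCouplingR π μ ν} = {givenByMapR μ fun x => Finv ν (Fcdf μ x)} := by
    rw [setOf_isOptimalCouplingR_eq hμ hν,
      (quantileCoupling_eq_givenByMapR_iff hT₀).2 (ae_Finv_eq_Finv_Fcdf_Finv hflat)]
  refine ⟨⟨fun ⟨T, hT, hopt⟩ => ?_, fun hflat => ⟨_, hT₀, hsuff hflat⟩⟩, hsuff⟩
  rw [setOf_isOptimalCouplingR_eq hμ hν, singleton_eq_singleton_iff] at hopt
  exact quantileFlatOnAtoms_of_ae_eq ((quantileCoupling_eq_givenByMapR_iff hT).1 hopt)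
end
end

section
/- Let μ, ν ∈ 𝒫₂(ℝ^d) and let μ(dx)k(x,dy) be a W₂-optimal coupling between μ and ν. Define 𝒯(x) = ∫ y k(x,dy) and η = 𝒯#μ. Then W₂²(μ,ν) = W₂²(μ,η) + ∫|y|² dν(y) − ∫|z|² dη(z), and the coupling (Id,𝒯)#μ is W₂-optimal between μ and η. -/
open MeasureTheory ProbabilityTheory Set Filter
open scoped ENNReal BoundedContinuousFunction

noncomputable section

abbrev Ed (d : ℕ) := EuclideanSpace ℝ (Fin d)

/-- π is a coupling of μ and ν. -/
def IsCoupling {d : ℕ} (π : Measure (Ed d × Ed d)) (μ ν : Measure (Ed d)) : Prop :=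
  π.map Prod.fst = μ ∧ π.map Prod.snd = ν

/-- quadratic transport cost of a coupling. -/
def cost {d : ℕ} (π : Measure (Ed d × Ed d)) : ℝ := ∫ p, ‖p.2 - p.1‖ ^ 2 ∂π

/-- squared quadratic Wasserstein distance. -/
def W2sq {d : ℕ} (μ ν : Measure (Ed d)) : ℝ := sInf (cost '' {π | IsCoupling π μ ν})

/-- π is a W₂-optimal coupling between μ and ν. -/
def IsOptimalCoupling {d : ℕ} (π : Measure (Ed d × Ed d)) (μ ν : Measure (Ed d)) : Prop :=
  IsCoupling π μ ν ∧ cost π = W2sq μ ν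

/-- the coupling (Id, T)#μ given by a map T. -/
def givenByMap {d : ℕ} (μ : Measure (Ed d)) (T : Ed d → Ed d) : Measure (Ed d × Ed d) :=
  μ.map (fun x => (x, T x))

/-- finite second moment. -/
def FiniteSecondMoment {d : ℕ} (μ : Measure (Ed d)) : Prop :=
  Integrable (fun x => ‖x‖ ^ 2) μ

/-- convex order: ∫φ dη ≤ ∫φ dν for all convex φ whose integrals make sense. -/
def ConvexOrder {d : ℕ} (η ν : Measure (Ed d)) : Prop :=
  ∀ φ : Ed d → ℝ, ConvexOn ℝ Set.univ φ → Integrable φ η → Integrable φ ν →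
    ∫ x, φ x ∂η ≤ ∫ y, φ y ∂ν

/-!
Bias–variance: for a Markov kernel `K` with barycenter `b` and any point `a`,
`∫ |y - a|² dK = (∫ |y|² dK - |b|²) + |b - a|²`. Applied to the optimal coupling `μ ⊗ k`, this
splits its cost into the variance gap `∫ |y|² dν - ∫ |z|² dη` plus the cost of `(Id, 𝒯)#μ`.
Conversely, disintegrating the law of `(𝒯 x, y)` along `η` gives a kernel `K` from `η` to `ν`
with barycenter `z`. Gluing any coupling `π` of `μ` and `η` with `K` yields a coupling of `μ`
and `ν` whose cost is the same variance gap plus `cost π`; comparing with the optimal cost shows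
`cost ((Id, 𝒯)#μ) ≤ cost π`.
-/

open scoped RealInnerProductSpace

theorem integrable_of_integrable_norm_sq {α F : Type*} [MeasurableSpace α] [NormedAddCommGroup F]
    {μ : Measure α} [IsFiniteMeasure μ] {f : α → F} (hf : AEStronglyMeasurable f μ)
    (hf2 : Integrable (fun x => ‖f x‖ ^ 2) μ) : Integrable f μ :=
  ((memLp_two_iff_integrable_sq_norm hf).2 hf2).integrable one_le_two

theorem integrable_norm_sub_sq {α F : Type*} [MeasurableSpace α] [NormedAddCommGroup F]
    {μ : Measure α} {f g : α → F} (hf : AEStronglyMeasurable f μ) (hg : AEStronglyMeasurable g μ)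
    (hf2 : Integrable (fun x => ‖f x‖ ^ 2) μ) (hg2 : Integrable (fun x => ‖g x‖ ^ 2) μ) :
    Integrable (fun x => ‖f x - g x‖ ^ 2) μ :=
  (memLp_two_iff_integrable_sq_norm (hf.sub hg)).1 <|
    ((memLp_two_iff_integrable_sq_norm hf).2 hf2).sub ((memLp_two_iff_integrable_sq_norm hg).2 hg2)

section SecondMoments

variable {E : Type*} [NormedAddCommGroup E] [InnerProductSpace ℝ E]
  [CompleteSpace E] [MeasurableSpace E] [BorelSpace E] [SecondCountableTopology E]

theorem integral_norm_sub_sq {ρ : Measure E} [IsProbabilityMeasure ρ]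
    (h2 : Integrable (fun y => ‖y‖ ^ 2) ρ) (c : E) :
    ∫ y, ‖y - c‖ ^ 2 ∂ρ = (∫ y, ‖y‖ ^ 2 ∂ρ - ‖∫ y, y ∂ρ‖ ^ 2) + ‖∫ y, y ∂ρ - c‖ ^ 2 := by
  have hid : Integrable (fun y : E => y) ρ :=
    integrable_of_integrable_norm_sq aestronglyMeasurable_id h2
  have hinner : ∫ y, ⟪y, c⟫ ∂ρ = ⟪∫ y, y ∂ρ, c⟫ := by
    simpa only [real_inner_comm c] using integral_inner hid c
  have hlin : Integrable (fun y => ‖y‖ ^ 2 - 2 * ⟪y, c⟫) ρ :=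
    h2.sub ((hid.inner_const c).const_mul 2)
  simp_rw [norm_sub_sq_real]
  rw [integral_add hlin (integrable_const _), integral_sub h2 ((hid.inner_const c).const_mul 2),
    integral_const_mul, hinner, integral_const, probReal_univ, one_smul]
  ring

theorem norm_integral_sq_le_integral_norm_sq {ρ : Measure E} [IsProbabilityMeasure ρ]
    (h2 : Integrable (fun y => ‖y‖ ^ 2) ρ) :
    ‖∫ y, y ∂ρ‖ ^ 2 ≤ ∫ y, ‖y‖ ^ 2 ∂ρ := by
  have h := integral_norm_sub_sq h2 (∫ y, y ∂ρ)
  have : 0 ≤ ∫ y, ‖y - ∫ y, y ∂ρ‖ ^ 2 ∂ρ := integral_nonneg fun _ => by positivity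
  simp only [sub_self, norm_zero] at h
  linarith

end SecondMoments

section KernelPythagoras

variable {α E : Type*} [MeasurableSpace α] [NormedAddCommGroup E] [InnerProductSpace ℝ E]
  [CompleteSpace E] [MeasurableSpace E] [BorelSpace E] [SecondCountableTopology E]
  {ρ : Measure α} [SFinite ρ] {K : Kernel α E} [IsMarkovKernel K]

theorem integrable_norm_sq_of_ae_integral_eq {b : α → E} (hb : Measurable b)
    (hbK : ∀ᵐ x ∂ρ, ∫ y, y ∂K x = b x)
    (hK2 : Integrable (fun q : α × E => ‖q.2‖ ^ 2) (ρ ⊗ₘ K)) :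
    Integrable (fun x => ‖b x‖ ^ 2) ρ := by
  obtain ⟨hKx, hI⟩ := (Measure.integrable_compProd_iff hK2.1).1 hK2
  simp only [Real.norm_eq_abs, abs_pow, abs_norm] at hI
  refine hI.mono' (hb.norm.pow_const 2).aestronglyMeasurable ?_
  filter_upwards [hKx, hbK] with x hx hbx
  rw [Real.norm_of_nonneg (by positivity), ← hbx]
  exact norm_integral_sq_le_integral_norm_sq hx

theorem integral_norm_sub_sq_compProd {a b : α → E} (ha : Measurable a)
    (ha2 : Integrable (fun x => ‖a x‖ ^ 2) ρ) (hb : Measurable b)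
    (hbK : ∀ᵐ x ∂ρ, ∫ y, y ∂K x = b x)
    (hK2 : Integrable (fun q : α × E => ‖q.2‖ ^ 2) (ρ ⊗ₘ K)) :
    ∫ q, ‖q.2 - a q.1‖ ^ 2 ∂(ρ ⊗ₘ K) =
      (∫ y, ‖y‖ ^ 2 ∂(ρ ⊗ₘ K).snd - ∫ x, ‖b x‖ ^ 2 ∂ρ) + ∫ x, ‖b x - a x‖ ^ 2 ∂ρ := by
  obtain ⟨hKx, hI⟩ := (Measure.integrable_compProd_iff hK2.1).1 hK2
  simp only [Real.norm_eq_abs, abs_pow, abs_norm] at hI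
  have hb2 := integrable_norm_sq_of_ae_integral_eq hb hbK hK2
  have ha2K : Integrable (fun q : α × E => ‖a q.1‖ ^ 2) (ρ ⊗ₘ K) := by
    rwa [← Measure.fst_compProd ρ K, Measure.fst, integrable_map_measure
      (ha.norm.pow_const 2).aestronglyMeasurable measurable_fst.aemeasurable] at ha2
  have hint : Integrable (fun q : α × E => ‖q.2 - a q.1‖ ^ 2) (ρ ⊗ₘ K) :=
    integrable_norm_sub_sq measurable_snd.aestronglyMeasurable
      (ha.comp measurable_fst).aestronglyMeasurable hK2 ha2K
  have hpt : ∀ᵐ x ∂ρ, ∫ y, ‖y - a x‖ ^ 2 ∂K x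
      = (∫ y, ‖y‖ ^ 2 ∂K x - ‖b x‖ ^ 2) + ‖b x - a x‖ ^ 2 := by
    filter_upwards [hKx, hbK] with x hx hbx
    rw [integral_norm_sub_sq hx, hbx]
  have hvar : Integrable (fun x => ∫ y, ‖y‖ ^ 2 ∂K x - ‖b x‖ ^ 2) ρ := hI.sub hb2
  rw [Measure.integral_compProd hint, integral_congr_ae hpt,
    integral_add hvar (integrable_norm_sub_sq hb.aestronglyMeasurable
      ha.aestronglyMeasurable hb2 ha2),
    integral_sub hI hb2, Measure.snd, integral_map measurable_snd.aemeasurable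
      (measurable_norm.pow_const 2).aestronglyMeasurable, Measure.integral_compProd hK2]

end KernelPythagoras

theorem fst_map_compProd {α β γ : Type*} [MeasurableSpace α] [MeasurableSpace β]
    [MeasurableSpace γ] {μ : Measure α} [SFinite μ] {k : Kernel α β} [IsMarkovKernel k]
    {T : α → γ} (hTm : Measurable T) :
    ((μ ⊗ₘ k).map (fun q => (T q.1, q.2))).fst = μ.map T := by
  rw [Measure.fst_map_prodMk measurable_snd]
  exact (Measure.map_map hTm measurable_fst).symm.trans
    (by rw [← Measure.fst, Measure.fst_compProd])

theorem snd_compProd_comap_snd {β γ δ : Type*} [MeasurableSpace β] [MeasurableSpace γ]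
    [MeasurableSpace δ] (π : Measure (β × γ)) [SFinite π] (K : Kernel γ δ) [IsSFiniteKernel K] :
    (π ⊗ₘ K.comap Prod.snd measurable_snd).snd = K ∘ₘ π.snd := by
  ext s hs
  rw [Measure.snd_compProd, Measure.bind_apply hs (Kernel.aemeasurable _),
    Measure.bind_apply hs (Kernel.aemeasurable _), Measure.snd,
    lintegral_map (K.measurable_coe hs) measurable_snd]
  rfl

section Disintegration

variable {α E : Type*} [MeasurableSpace α] [NormedAddCommGroup E] [NormedSpace ℝ E]
  [CompleteSpace E] [MeasurableSpace E] [BorelSpace E] [SecondCountableTopology E]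
  {μ : Measure α} [IsFiniteMeasure μ] {k : Kernel α E} [IsMarkovKernel k] {T : α → E}

theorem ae_integral_condKernel_map_eq (hT : T = fun x => ∫ y, y ∂k x) (hTm : Measurable T)
    (hk : Integrable (fun q : α × E => q.2) (μ ⊗ₘ k)) :
    ∀ᵐ z ∂(μ.map T), ∫ y, y ∂((μ ⊗ₘ k).map (fun q => (T q.1, q.2))).condKernel z = z := by
  set g : α × E → E × E := fun q => (T q.1, q.2)
  have hg : Measurable g := (hTm.comp measurable_fst).prodMk measurable_snd
  set m := (μ ⊗ₘ k).map g
  have hfst : m.fst = μ.map T := fst_map_compProd hTm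
  have hm : Integrable (fun p : E × E => p.2) m :=
    (integrable_map_measure measurable_snd.aestronglyMeasurable hg.aemeasurable).2 hk
  have hT1 : Integrable T μ := by
    rw [Measure.compProd] at hk
    simpa [hT] using hk.integral_compProd
  have hid : Integrable (fun z : E => z) m.fst := by
    rw [hfst]
    exact (integrable_map_measure aestronglyMeasurable_id hTm.aemeasurable).2 hT1
  rw [← hfst]
  refine ae_eq_of_forall_setIntegral_eq_of_sigmaFinite
    (fun s _ _ => hm.integral_condKernel.integrableOn) (fun s _ _ => hid.integrableOn)
    fun s hs _ => ?_
  have hpre : g ⁻¹' (s ×ˢ univ) = (T ⁻¹' s) ×ˢ univ := by ext; simp [g]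
  calc ∫ z in s, ∫ y, y ∂m.condKernel z ∂m.fst
      = ∫ q in (T ⁻¹' s) ×ˢ univ, q.2 ∂(μ ⊗ₘ k) := by
        rw [Measure.setIntegral_condKernel_univ_right hs hm.integrableOn,
          setIntegral_map (hs.prod .univ) measurable_snd.aestronglyMeasurable hg.aemeasurable, hpre]
    _ = ∫ x in T ⁻¹' s, T x ∂μ := by
        rw [Measure.setIntegral_compProd (hTm hs) .univ hk.integrableOn, hT]
        simp only [Measure.restrict_univ]
    _ = ∫ z in s, z ∂m.fst := by
        rw [hfst, setIntegral_map (f := fun z : E => z) hs aestronglyMeasurable_id hTm.aemeasurable]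

end Disintegration

section Couplings

variable {d : ℕ} {π : Measure (Ed d × Ed d)} {μ ν : Measure (Ed d)}

theorem IsCoupling.isFiniteMeasure [IsFiniteMeasure μ] (hc : IsCoupling π μ ν) :
    IsFiniteMeasure π :=
  ⟨by rw [← Measure.fst_univ, Measure.fst, hc.1]; exact measure_lt_top μ univ⟩

theorem IsCoupling.integrable_norm_sq_fst (hc : IsCoupling π μ ν) (hμ : FiniteSecondMoment μ) :
    Integrable (fun p => ‖p.1‖ ^ 2) π :=
  (integrable_map_measure (measurable_norm.pow_const 2).aestronglyMeasurable
    measurable_fst.aemeasurable).1 (hc.1 ▸ hμ)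

theorem IsCoupling.integrable_norm_sq_snd (hc : IsCoupling π μ ν) (hν : FiniteSecondMoment ν) :
    Integrable (fun p => ‖p.2‖ ^ 2) π :=
  (integrable_map_measure (measurable_norm.pow_const 2).aestronglyMeasurable
    measurable_snd.aemeasurable).1 (hc.2 ▸ hν)

theorem W2sq_le_cost (hc : IsCoupling π μ ν) : W2sq μ ν ≤ cost π :=
  csInf_le ⟨0, by rintro _ ⟨π', -, rfl⟩; exact integral_nonneg fun _ => by positivity⟩ ⟨π, hc, rfl⟩

theorem isOptimalCoupling_of_forall_cost_le (hc : IsCoupling π μ ν)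
    (h : ∀ π', IsCoupling π' μ ν → cost π ≤ cost π') : IsOptimalCoupling π μ ν :=
  ⟨hc, le_antisymm (le_csInf ⟨_, π, hc, rfl⟩ (by rintro _ ⟨π', hπ', rfl⟩; exact h π' hπ'))
    (W2sq_le_cost hc)⟩

theorem isCoupling_givenByMap {T : Ed d → Ed d} (hT : Measurable T) :
    IsCoupling (givenByMap μ T) μ (μ.map T) :=
  ⟨by rw [givenByMap, ← Measure.fst, Measure.fst_map_prodMk hT, Measure.map_id'],
    Measure.snd_map_prodMk measurable_id⟩

theorem cost_givenByMap {T : Ed d → Ed d} (hT : Measurable T) :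
    cost (givenByMap μ T) = ∫ x, ‖T x - x‖ ^ 2 ∂μ :=
  integral_map (measurable_id.prodMk hT).aemeasurable
    (by fun_prop : Measurable fun p : Ed d × Ed d => ‖p.2 - p.1‖ ^ 2).aestronglyMeasurable

end Couplings

section BarycentricProjection

variable {d : ℕ} {μ ν : Measure (Ed d)} [IsFiniteMeasure μ]

theorem cost_compProd_eq {k : Kernel (Ed d) (Ed d)} [IsMarkovKernel k] {T : Ed d → Ed d}
    (hT : T = fun x => ∫ y, y ∂k x) (hTm : Measurable T) (hμ : FiniteSecondMoment μ)
    (hkν : (μ ⊗ₘ k).map Prod.snd = ν) (hν : FiniteSecondMoment ν) :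
    cost (μ ⊗ₘ k) = (∫ y, ‖y‖ ^ 2 ∂ν - ∫ z, ‖z‖ ^ 2 ∂(μ.map T)) + cost (givenByMap μ T) := by
  have hk2 : Integrable (fun q : Ed d × Ed d => ‖q.2‖ ^ 2) (μ ⊗ₘ k) :=
    (integrable_map_measure (measurable_norm.pow_const 2).aestronglyMeasurable
      measurable_snd.aemeasurable).1 (hkν ▸ hν)
  have h := integral_norm_sub_sq_compProd measurable_id hμ hTm (by simp [hT]) hk2
  rw [cost, cost_givenByMap hTm, integral_map hTm.aemeasurable
    (measurable_norm.pow_const 2).aestronglyMeasurable, ← hkν]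
  exact h

theorem W2sq_le_cost_add_of_barycenter {η : Measure (Ed d)} {π : Measure (Ed d × Ed d)}
    (hc : IsCoupling π μ η) (hμ : FiniteSecondMoment μ) (hν : FiniteSecondMoment ν)
    {K : Kernel (Ed d) (Ed d)} [IsMarkovKernel K] (hK : K ∘ₘ η = ν)
    (hbar : ∀ᵐ z ∂η, ∫ y, y ∂K z = z) :
    W2sq μ ν ≤ (∫ y, ‖y‖ ^ 2 ∂ν - ∫ z, ‖z‖ ^ 2 ∂η) + cost π := by
  have := hc.isFiniteMeasure
  set ρ := π ⊗ₘ K.comap Prod.snd measurable_snd with hρ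
  have hρν : ρ.snd = ν := by rw [snd_compProd_comap_snd, Measure.snd, hc.2, hK]
  have hq : Measurable fun q : (Ed d × Ed d) × Ed d => (q.1.1, q.2) :=
    (measurable_fst.comp measurable_fst).prodMk measurable_snd
  have hglue : IsCoupling (ρ.map fun q => (q.1.1, q.2)) μ ν := by
    refine ⟨?_, (Measure.snd_map_prodMk (measurable_fst.comp measurable_fst)).trans hρν⟩
    rw [← Measure.fst, Measure.fst_map_prodMk measurable_snd]
    refine (Measure.map_map measurable_fst measurable_fst).symm.trans ?_
    rw [← Measure.fst, ← Measure.fst, hρ, Measure.fst_compProd]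
    exact hc.1
  have hρ2 : Integrable (fun q : (Ed d × Ed d) × Ed d => ‖q.2‖ ^ 2) ρ :=
    (integrable_map_measure (measurable_norm.pow_const 2).aestronglyMeasurable
      measurable_snd.aemeasurable).1 (hρν ▸ hν : Integrable _ ρ.snd)
  have hbarπ : ∀ᵐ p : Ed d × Ed d ∂π, ∫ y, y ∂K p.2 = p.2 :=
    ae_of_ae_map measurable_snd.aemeasurable (hc.2 ▸ hbar)
  calc W2sq μ ν ≤ cost (ρ.map fun q => (q.1.1, q.2)) := W2sq_le_cost hglue
    _ = ∫ q, ‖q.2 - q.1.1‖ ^ 2 ∂ρ := integral_map hq.aemeasurable (by fun_prop)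
    _ = _ := by
      rw [integral_norm_sub_sq_compProd measurable_fst (hc.integrable_norm_sq_fst hμ) measurable_snd
        hbarπ hρ2, hρν, ← hc.2, integral_map measurable_snd.aemeasurable
        (measurable_norm.pow_const 2).aestronglyMeasurable, cost]

end BarycentricProjection

theorem stmt4_general {d : ℕ} (μ ν : Measure (Ed d)) [IsProbabilityMeasure μ]
    (hμ : FiniteSecondMoment μ) (hν : FiniteSecondMoment ν)
    (k : Kernel (Ed d) (Ed d)) [IsMarkovKernel k]
    (hopt : IsOptimalCoupling (μ.compProd k) μ ν)
    (T : Ed d → Ed d) (hT : T = fun x => ∫ y, y ∂(k x)) :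
    W2sq μ ν = W2sq μ (μ.map T) + ∫ y, ‖y‖ ^ 2 ∂ν - ∫ z, ‖z‖ ^ 2 ∂(μ.map T) ∧
      IsOptimalCoupling (givenByMap μ T) μ (μ.map T) := by
  obtain ⟨hγ, hcost⟩ := hopt
  have hTm : Measurable T := hT ▸ stronglyMeasurable_id.integral_kernel.measurable
  have hA := cost_compProd_eq hT hTm hμ hγ.2 hν
  set m := (μ ⊗ₘ k).map fun q => (T q.1, q.2)
  have hmν : m.condKernel ∘ₘ μ.map T = ν := by
    rw [← fst_map_compProd (k := k) hTm, ← Measure.snd_compProd, m.disintegrate]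
    exact (Measure.snd_map_prodMk (hTm.comp measurable_fst)).trans hγ.2
  have hbar := ae_integral_condKernel_map_eq hT hTm
    (integrable_of_integrable_norm_sq measurable_snd.aestronglyMeasurable
      (hγ.integrable_norm_sq_snd hν))
  have hgiven : IsOptimalCoupling (givenByMap μ T) μ (μ.map T) :=
    isOptimalCoupling_of_forall_cost_le (isCoupling_givenByMap hTm) fun π hπ => by
      have := W2sq_le_cost_add_of_barycenter hπ hμ hν hmν hbar
      linarith
  refine ⟨?_, hgiven⟩
  rw [← hcost, hA, hgiven.2]
  ring

/-- Pythagorean decomposition of W₂² along the barycentric projection, and optimality of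
the coupling (Id,T)#μ between μ and η = T#μ. -/
theorem stmt4 {d : ℕ} (μ ν : Measure (Ed d)) [IsProbabilityMeasure μ] [IsProbabilityMeasure ν]
    (hμ : FiniteSecondMoment μ) (hν : FiniteSecondMoment ν)
    (k : Kernel (Ed d) (Ed d)) [IsMarkovKernel k]
    (hopt : IsOptimalCoupling (μ.compProd k) μ ν)
    (T : Ed d → Ed d) (hT : T = fun x => ∫ y, y ∂(k x)) :
    W2sq μ ν = W2sq μ (μ.map T) + ∫ y, ‖y‖ ^ 2 ∂ν - ∫ z, ‖z‖ ^ 2 ∂(μ.map T) ∧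
      IsOptimalCoupling (givenByMap μ T) μ (μ.map T) :=
  stmt4_general μ ν hμ hν k hopt T hT
end
end

section
/- Let μ, ν, η ∈ 𝒫₂(ℝ^d) with η ≤ ν in the convex order and such that W₂²(μ,ν) = W₂²(μ,η) + ∫|y|² dν(y) − ∫|z|² dη(z). If μ(dx)q(x,dz) is a W₂-optimal coupling between μ and η and η(dz)m(z,dy) is any martingale coupling between η and ν, then the composition μ(dx)(qm)(x,dy), where qm(x,dy) = ∫_z q(x,dz)m(z,dy), is a W₂-optimal coupling between μ and ν. -/
open MeasureTheory ProbabilityTheory Set Filter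
open scoped ENNReal BoundedContinuousFunction

noncomputable section

open scoped RealInnerProductSpace

/-! Realise x ~ μ, z ~ η and y ~ ν on one space through τ = μ(dx) q(x,dz) m(z,dy). Expanding
‖y - x‖² = ‖z - x‖² + ‖y‖² - ‖z‖² - 2⟪x, y - z⟫, the cross term integrates to zero because,
given (x, z), the law m(z, ·) of y has barycentre z. So the cost of μ(dx)(qm)(x,dy) is
W₂²(μ,η) + ∫‖y‖² dν - ∫‖z‖² dη, which is W₂²(μ,ν) by the assumed identity. -/

namespace MeasureTheory.Measure

variable {α β γ : Type*} [MeasurableSpace α] [MeasurableSpace β] [MeasurableSpace γ]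

lemma map_compProd_prodMkLeft_eq_compProd_comp (μ : Measure α) [SFinite μ]
    (κ : Kernel α β) [IsSFiniteKernel κ] (η : Kernel β γ) [IsSFiniteKernel η] :
    (μ ⊗ₘ κ ⊗ₘ η.prodMkLeft α).map (fun p => (p.1.1, p.2)) = μ ⊗ₘ (η ∘ₖ κ) := by
  rw [← Kernel.snd_compProd_prodMkLeft, Kernel.snd_eq, compProd_map measurable_snd,
    ← compProd_assoc', map_map (by fun_prop) (by fun_prop)]
  rfl

lemma snd_compProd_prodMkLeft (μ : Measure α) [SFinite μ]
    (κ : Kernel α β) [IsSFiniteKernel κ] (η : Kernel β γ) [IsSFiniteKernel η] :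
    (μ ⊗ₘ κ ⊗ₘ η.prodMkLeft α).snd = η ∘ₘ (μ ⊗ₘ κ).snd := by
  rw [snd_compProd, prodMkLeft_comp_compProd, snd_compProd]

end MeasureTheory.Measure

section InnerProductSpace

variable {E : Type*} [NormedAddCommGroup E] [InnerProductSpace ℝ E]

lemma norm_sub_sq_eq_norm_sub_sq_add_sub_inner (x y z : E) :
    ‖y - x‖ ^ 2 = ‖z - x‖ ^ 2 + (‖y‖ ^ 2 - ‖z‖ ^ 2) - 2 * ⟪x, y - z⟫ := by
  rw [norm_sub_sq_real, norm_sub_sq_real, inner_sub_right, real_inner_comm y, real_inner_comm z]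
  ring

lemma MeasureTheory.MemLp.integrable_inner {Ω : Type*} [MeasurableSpace Ω] {τ : Measure Ω}
    {f g : Ω → E} (hf : MemLp f 2 τ) (hg : MemLp g 2 τ) : Integrable (fun ω => ⟪f ω, g ω⟫) τ :=
  memLp_one_iff_integrable.1 <| hf.of_bilin (fun a b => ⟪a, b⟫) 1 hg (hf.1.inner hg.1)
    (Eventually.of_forall fun _ => by simpa using nnnorm_inner_le_nnnorm _ _)

variable [CompleteSpace E] [MeasurableSpace E]

lemma integral_inner_sub_eq_zero_of_integral_eq {ν : Measure E} [IsProbabilityMeasure ν] {z : E}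
    (hint : Integrable (fun y => y) ν) (hbar : ∫ y, y ∂ν = z) (x : E) :
    ∫ y, ⟪x, y - z⟫ ∂ν = 0 := by
  rw [integral_inner (f := fun y => y - z) (hint.sub (integrable_const z)),
    integral_sub hint (integrable_const z), hbar, integral_const, probReal_univ, one_smul,
    sub_self, inner_zero_right]

lemma integral_inner_sub_compProd_prodMkLeft_eq_zero (ρ : Measure (E × E)) [SFinite ρ]
    {m : Kernel E E} [IsMarkovKernel m]
    (hmInt : ∀ z, Integrable (fun y => y) (m z)) (hmBar : ∀ z, ∫ y, y ∂(m z) = z)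
    (h : Integrable (fun p : (E × E) × E => ⟪p.1.1, p.2 - p.1.2⟫) (ρ ⊗ₘ m.prodMkLeft E)) :
    ∫ p, ⟪p.1.1, p.2 - p.1.2⟫ ∂(ρ ⊗ₘ m.prodMkLeft E) = 0 := by
  rw [Measure.integral_compProd h]
  exact integral_eq_zero_of_ae <| ae_of_all _ fun p =>
    integral_inner_sub_eq_zero_of_integral_eq (hmInt p.2) (hmBar p.2) p.1

theorem integral_norm_sub_sq_compProd_prodMkLeft (ρ : Measure (E × E)) [SFinite ρ]
    {m : Kernel E E} [IsMarkovKernel m]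
    (hmInt : ∀ z, Integrable (fun y => y) (m z)) (hmBar : ∀ z, ∫ y, y ∂(m z) = z)
    (hx : MemLp (fun p : (E × E) × E => p.1.1) 2 (ρ ⊗ₘ m.prodMkLeft E))
    (hz : MemLp (fun p : (E × E) × E => p.1.2) 2 (ρ ⊗ₘ m.prodMkLeft E))
    (hy : MemLp (fun p : (E × E) × E => p.2) 2 (ρ ⊗ₘ m.prodMkLeft E)) :
    ∫ p, ‖p.2 - p.1.1‖ ^ 2 ∂(ρ ⊗ₘ m.prodMkLeft E) =
      ∫ p, ‖p.1.2 - p.1.1‖ ^ 2 ∂(ρ ⊗ₘ m.prodMkLeft E) + ∫ p, ‖p.2‖ ^ 2 ∂(ρ ⊗ₘ m.prodMkLeft E)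
        - ∫ p, ‖p.1.2‖ ^ 2 ∂(ρ ⊗ₘ m.prodMkLeft E) := by
  set τ := ρ ⊗ₘ m.prodMkLeft E
  have hpt : (fun p : (E × E) × E => ‖p.2 - p.1.1‖ ^ 2) = fun p =>
      ‖p.1.2 - p.1.1‖ ^ 2 + (‖p.2‖ ^ 2 - ‖p.1.2‖ ^ 2) - 2 * ⟪p.1.1, p.2 - p.1.2⟫ :=
    funext fun p => norm_sub_sq_eq_norm_sub_sq_add_sub_inner p.1.1 p.2 p.1.2
  have hcross : Integrable (fun p : (E × E) × E => ⟪p.1.1, p.2 - p.1.2⟫) τ :=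
    hx.integrable_inner (hy.sub hz)
  have hzx : Integrable (fun p : (E × E) × E => ‖p.1.2 - p.1.1‖ ^ 2) τ :=
    (hz.sub hx).integrable_norm_pow two_ne_zero
  have hy2 : Integrable (fun p : (E × E) × E => ‖p.2‖ ^ 2) τ := hy.integrable_norm_pow two_ne_zero
  have hz2 : Integrable (fun p : (E × E) × E => ‖p.1.2‖ ^ 2) τ := hz.integrable_norm_pow two_ne_zero
  have hdiff : Integrable (fun p : (E × E) × E => ‖p.2‖ ^ 2 - ‖p.1.2‖ ^ 2) τ := hy2.sub hz2
  have hsum : Integrable (fun p : (E × E) × E =>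
      ‖p.1.2 - p.1.1‖ ^ 2 + (‖p.2‖ ^ 2 - ‖p.1.2‖ ^ 2)) τ := hzx.add hdiff
  rw [hpt, integral_sub hsum (hcross.const_mul 2), integral_add hzx hdiff, integral_sub hy2 hz2,
    integral_const_mul,
    integral_inner_sub_compProd_prodMkLeft_eq_zero ρ hmInt hmBar hcross, mul_zero, sub_zero,
    add_sub_assoc]

end InnerProductSpace

lemma FiniteSecondMoment.memLp_of_map_eq {d : ℕ} {μ : Measure (Ed d)} (hμ : FiniteSecondMoment μ)
    {Ω : Type*} [MeasurableSpace Ω] {τ : Measure Ω} {f : Ω → Ed d} (hf : Measurable f)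
    (hτ : τ.map f = μ) : MemLp f 2 τ := by
  subst hτ
  exact (memLp_map_measure_iff aestronglyMeasurable_id hf.aemeasurable).1 <|
    (memLp_two_iff_integrable_sq_norm aestronglyMeasurable_id).2 hμ

lemma cost_map {d : ℕ} {Ω : Type*} [MeasurableSpace Ω] (τ : Measure Ω) {f g : Ω → Ed d}
    (hf : Measurable f) (hg : Measurable g) :
    cost (τ.map fun ω => (f ω, g ω)) = ∫ ω, ‖g ω - f ω‖ ^ 2 ∂τ :=
  integral_map (hf.prodMk hg).aemeasurable (by fun_prop)

lemma integral_norm_sq_map {d : ℕ} {Ω : Type*} [MeasurableSpace Ω] (τ : Measure Ω)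
    {f : Ω → Ed d} (hf : Measurable f) : ∫ y, ‖y‖ ^ 2 ∂(τ.map f) = ∫ ω, ‖f ω‖ ^ 2 ∂τ :=
  integral_map hf.aemeasurable (by fun_prop)

theorem stmt5_general {d : ℕ} (μ ν η : Measure (Ed d))
    [IsProbabilityMeasure μ] [IsProbabilityMeasure ν] [IsProbabilityMeasure η]
    (hμ : FiniteSecondMoment μ) (hν : FiniteSecondMoment ν) (hη : FiniteSecondMoment η)
    (hW : W2sq μ ν = W2sq μ η + ∫ y, ‖y‖ ^ 2 ∂ν - ∫ z, ‖z‖ ^ 2 ∂η)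
    (q : Kernel (Ed d) (Ed d)) [IsMarkovKernel q]
    (hq : IsOptimalCoupling (μ.compProd q) μ η)
    (m : Kernel (Ed d) (Ed d)) [IsMarkovKernel m]
    (hmInt : ∀ z, Integrable (fun y => y) (m z))
    (hmBar : ∀ z, ∫ y, y ∂(m z) = z)
    (hmν : η.bind (fun z => m z) = ν) :
    IsOptimalCoupling (μ.compProd (m.comp q)) μ ν := by
  set τ := μ ⊗ₘ q ⊗ₘ m.prodMkLeft (Ed d)
  have hτq : τ.map Prod.fst = μ ⊗ₘ q := Measure.fst_compProd _ _
  have hτπ : τ.map (fun p => (p.1.1, p.2)) = μ ⊗ₘ (m ∘ₖ q) :=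
    Measure.map_compProd_prodMkLeft_eq_compProd_comp μ q m
  have hτμ : τ.map (fun p => p.1.1) = μ := by
    change τ.map (Prod.fst ∘ Prod.fst) = μ
    rw [← Measure.map_map measurable_fst measurable_fst, hτq]
    exact Measure.fst_compProd μ q
  have hτη : τ.map (fun p => p.1.2) = η := by
    change τ.map (Prod.snd ∘ Prod.fst) = η
    rw [← Measure.map_map measurable_snd measurable_fst, hτq]
    exact hq.1.2
  have hτν : τ.map Prod.snd = ν := by
    rw [← hmν, ← hq.1.2]
    exact Measure.snd_compProd_prodMkLeft μ q m
  refine ⟨⟨Measure.fst_compProd μ _, ?_⟩, ?_⟩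
  · rw [← hτπ, Measure.map_map measurable_snd (by fun_prop)]
    exact hτν
  · rw [hW, ← hq.2, ← hτπ, ← hτq, cost_map τ (by fun_prop) measurable_snd,
      cost_map τ (f := fun p => p.1.1) (g := fun p => p.1.2) (by fun_prop) (by fun_prop),
      ← hτν, ← hτη, integral_norm_sq_map τ measurable_snd, integral_norm_sq_map τ (by fun_prop)]
    exact integral_norm_sub_sq_compProd_prodMkLeft _ hmInt hmBar
      (hμ.memLp_of_map_eq (by fun_prop) hτμ) (hη.memLp_of_map_eq (by fun_prop) hτη)
      (hν.memLp_of_map_eq measurable_snd hτν)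

/-- Composing an optimal coupling between μ and η with a martingale coupling between η and ν
yields an optimal coupling between μ and ν, when the Pythagorean identity holds. -/
theorem stmt5 {d : ℕ} (μ ν η : Measure (Ed d))
    [IsProbabilityMeasure μ] [IsProbabilityMeasure ν] [IsProbabilityMeasure η]
    (hμ : FiniteSecondMoment μ) (hν : FiniteSecondMoment ν) (hη : FiniteSecondMoment η)
    (hcx : ConvexOrder η ν)
    (hW : W2sq μ ν = W2sq μ η + ∫ y, ‖y‖ ^ 2 ∂ν - ∫ z, ‖z‖ ^ 2 ∂η)
    (q : Kernel (Ed d) (Ed d)) [IsMarkovKernel q]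
    (hq : IsOptimalCoupling (μ.compProd q) μ η)
    (m : Kernel (Ed d) (Ed d)) [IsMarkovKernel m]
    (hmInt : ∀ z, Integrable (fun y => y) (m z))
    (hmBar : ∀ z, ∫ y, y ∂(m z) = z)
    (hmν : η.bind (fun z => m z) = ν) :
    IsOptimalCoupling (μ.compProd (m.comp q)) μ ν :=
  stmt5_general μ ν η hμ hν hη hW q hq m hmInt hmBar hmν
end
end

section
/- Let X ∼ μ be a real random variable and U an independent uniform random variable on [0,1]. Then the random variable V = Fμ(X−) + U·(Fμ(X) − Fμ(X−)) is uniformly distributed on [0,1] and almost surely Fμ⁻¹(V) = X. -/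
open MeasureTheory ProbabilityTheory Set Filter
open scoped ENNReal

noncomputable section

/-- If every left-slice of `S` inside `S` is null, then `S` is null. -/
lemma null_of_forall_inter_Iic (μ : Measure ℝ) {S : Set ℝ}
    (h : ∀ x ∈ S, μ (S ∩ Set.Iic x) = 0) : μ S = 0 := by
  have key : ∀ y : ℝ, (∃ s ∈ S, y ≤ s) → μ (S ∩ Set.Iic y) = 0 := by
    rintro y ⟨s, hs, hys⟩
    exact measure_mono_null (Set.inter_subset_inter_right S (Set.Iic_subset_Iic.2 hys)) (h s hs)
  rcases S.eq_empty_or_nonempty with rfl | hne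
  · simp
  by_cases hb : BddAbove S
  · set t := sSup S with ht
    by_cases hts : t ∈ S
    · exact measure_mono_null (fun x hx => Set.mem_inter hx (le_csSup hb hx)) (h t hts)
    · have hsub : S ⊆ ⋃ n : ℕ, S ∩ Set.Iic (t - ((n : ℝ) + 1)⁻¹) := by
        intro x hx
        have hxt : x < t := lt_of_le_of_ne (le_csSup hb hx) (fun hh => hts (hh ▸ hx))
        obtain ⟨n, hn⟩ := exists_nat_one_div_lt (sub_pos.2 hxt)
        rw [one_div] at hn
        exact Set.mem_iUnion.2 ⟨n, hx, by simp only [Set.mem_Iic]; linarith⟩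
      refine measure_mono_null hsub (measure_iUnion_null fun n => ?_)
      by_cases hlt : t - ((n : ℝ) + 1)⁻¹ < t
      · obtain ⟨s, hs, hslt⟩ := exists_lt_of_lt_csSup hne hlt
        exact key _ ⟨s, hs, hslt.le⟩
      · exfalso; apply hlt; have : (0:ℝ) < ((n:ℝ)+1)⁻¹ := by positivity
        linarith
  · have hsub : S ⊆ ⋃ n : ℕ, S ∩ Set.Iic (n : ℝ) := by
      intro x hx
      obtain ⟨n, hn⟩ := exists_nat_ge x
      exact Set.mem_iUnion.2 ⟨n, hx, hn⟩
    refine measure_mono_null hsub (measure_iUnion_null fun n => ?_)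
    rw [not_bddAbove_iff] at hb
    obtain ⟨s, hs, hns⟩ := hb n
    exact key _ ⟨s, hs, hns.le⟩

section basics
variable (μ : Measure ℝ) [IsProbabilityMeasure μ]

lemma Fcdf_mono : Monotone (Fcdf μ) := fun a b hab =>
  ENNReal.toReal_mono (measure_ne_top μ _) (measure_mono (Set.Iic_subset_Iic.2 hab))

lemma Fleft_mono : Monotone (Fleft μ) := fun a b hab =>
  ENNReal.toReal_mono (measure_ne_top μ _) (measure_mono (Set.Iio_subset_Iio hab))

lemma Fcdf_nonneg (x : ℝ) : 0 ≤ Fcdf μ x := ENNReal.toReal_nonneg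
lemma Fleft_nonneg (x : ℝ) : 0 ≤ Fleft μ x := ENNReal.toReal_nonneg

lemma Fleft_le_Fcdf (x : ℝ) : Fleft μ x ≤ Fcdf μ x :=
  ENNReal.toReal_mono (measure_ne_top μ _) (measure_mono Set.Iio_subset_Iic_self)

lemma Fcdf_le_one (x : ℝ) : Fcdf μ x ≤ 1 := by
  have := prob_le_one (μ := μ) (s := Set.Iic x)
  calc Fcdf μ x ≤ (1 : ℝ≥0∞).toReal := ENNReal.toReal_mono (by simp) this
    _ = 1 := by simp

lemma ofReal_Fcdf (x : ℝ) : ENNReal.ofReal (Fcdf μ x) = μ (Set.Iic x) :=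
  ENNReal.ofReal_toReal (measure_ne_top μ _)

lemma ofReal_Fleft (x : ℝ) : ENNReal.ofReal (Fleft μ x) = μ (Set.Iio x) :=
  ENNReal.ofReal_toReal (measure_ne_top μ _)

lemma measurable_Fcdf : Measurable (Fcdf μ) := (Fcdf_mono μ).measurable
lemma measurable_Fleft : Measurable (Fleft μ) := (Fleft_mono μ).measurable

lemma Fcdf_le_Fleft_of_lt {x y : ℝ} (h : x < y) : Fcdf μ x ≤ Fleft μ y :=
  ENNReal.toReal_mono (measure_ne_top μ _) (measure_mono fun z hz => lt_of_le_of_lt hz h)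

lemma Ioc_null_of_cdf_eq {y x : ℝ} (h : y ≤ x) (he : Fcdf μ y = Fcdf μ x) :
    μ (Set.Ioc y x) = 0 := by
  have hmeq : μ (Set.Iic y) = μ (Set.Iic x) := by
    rw [← ofReal_Fcdf μ y, ← ofReal_Fcdf μ x, he]
  have hsplit : μ (Set.Iic y) + μ (Set.Ioc y x) = μ (Set.Iic x) := by
    rw [← measure_union (Set.Iic_disjoint_Ioc le_rfl) measurableSet_Ioc,
      Set.Iic_union_Ioc_eq_Iic h]
  rw [hmeq] at hsplit
  have hne := measure_ne_top μ (Set.Iic x)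
  nth_rewrite 2 [← add_zero (μ (Set.Iic x))] at hsplit
  exact (ENNReal.add_right_inj hne).1 hsplit

lemma measure_Iio_eq_iSup (x : ℝ) :
    μ (Set.Iio x) = ⨆ n : ℕ, μ (Set.Iic (x - ((n : ℝ) + 1)⁻¹)) := by
  have hU : Set.Iio x = ⋃ n : ℕ, Set.Iic (x - ((n : ℝ) + 1)⁻¹) := by
    ext y
    simp only [Set.mem_Iio, Set.mem_iUnion, Set.mem_Iic]
    constructor
    · intro hy
      obtain ⟨n, hn⟩ := exists_nat_one_div_lt (sub_pos.2 hy)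
      rw [one_div] at hn
      exact ⟨n, by linarith⟩
    · rintro ⟨n, hn⟩
      have : (0:ℝ) < ((n:ℝ)+1)⁻¹ := by positivity
      linarith
  rw [hU]
  exact Monotone.measure_iUnion (fun a b hab => Set.Iic_subset_Iic.2 (by
    have : ((b:ℝ)+1)⁻¹ ≤ ((a:ℝ)+1)⁻¹ := by
      apply inv_anti₀ (by positivity) (by exact_mod_cast by linarith)
    linarith))

lemma measure_Iic_eq_iInf (x : ℝ) :
    μ (Set.Iic x) = ⨅ n : ℕ, μ (Set.Iic (x + ((n : ℝ) + 1)⁻¹)) := by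
  have hU : Set.Iic x = ⋂ n : ℕ, Set.Iic (x + ((n : ℝ) + 1)⁻¹) := by
    ext y
    simp only [Set.mem_Iic, Set.mem_iInter]
    constructor
    · intro hy n
      have : (0:ℝ) < ((n:ℝ)+1)⁻¹ := by positivity
      linarith
    · intro hy
      by_contra hxy
      push_neg at hxy
      obtain ⟨n, hn⟩ := exists_nat_one_div_lt (sub_pos.2 hxy)
      rw [one_div] at hn
      have := hy n
      linarith
  rw [hU]
  refine Antitone.measure_iInter (fun a b hab => Set.Iic_subset_Iic.2 (by
    have : ((b:ℝ)+1)⁻¹ ≤ ((a:ℝ)+1)⁻¹ := by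
      apply inv_anti₀ (by positivity) (by exact_mod_cast by linarith)
    linarith)) (fun n => measurableSet_Iic.nullMeasurableSet) ⟨0, measure_ne_top μ _⟩

end basics

section quantile
variable (μ : Measure ℝ) [IsProbabilityMeasure μ]

lemma exists_cdf_lt {v : ℝ} (hv : 0 < v) : ∃ x₀ : ℝ, ∀ y ≤ x₀, Fcdf μ y < v := by
  have hI : (⋂ n : ℕ, Set.Iic (-(n:ℝ))) = ∅ := by
    ext y
    simp only [Set.mem_iInter, Set.mem_Iic, Set.mem_empty_iff_false, iff_false, not_forall,
      not_le]
    obtain ⟨n, hn⟩ := exists_nat_gt (-y)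
    exact ⟨n, by linarith⟩
  have h0 : (⨅ n : ℕ, μ (Set.Iic (-(n:ℝ)))) = 0 := by
    rw [← Antitone.measure_iInter (fun a b hab => Set.Iic_subset_Iic.2 (by
        simp only [neg_le_neg_iff]; exact_mod_cast hab))
      (fun n => measurableSet_Iic.nullMeasurableSet) ⟨0, measure_ne_top μ _⟩, hI,
      measure_empty]
  have hlt : (⨅ n : ℕ, μ (Set.Iic (-(n:ℝ)))) < ENNReal.ofReal v := by
    rw [h0]; exact ENNReal.ofReal_pos.2 hv
  obtain ⟨n, hn⟩ := iInf_lt_iff.1 hlt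
  refine ⟨-(n:ℝ), fun y hy => ?_⟩
  have h1 : Fcdf μ (-(n:ℝ)) < v := by
    have := (ENNReal.lt_ofReal_iff_toReal_lt (measure_ne_top μ _)).1 hn
    exact this
  exact lt_of_le_of_lt (Fcdf_mono μ hy) h1

lemma exists_cdf_ge {v : ℝ} (hv : v < 1) : ∃ x : ℝ, v ≤ Fcdf μ x := by
  have hI : (⋃ n : ℕ, Set.Iic ((n:ℝ))) = Set.univ := by
    ext y
    simp only [Set.mem_iUnion, Set.mem_Iic, Set.mem_univ, iff_true]
    obtain ⟨n, hn⟩ := exists_nat_ge y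
    exact ⟨n, hn⟩
  have h1 : (⨆ n : ℕ, μ (Set.Iic ((n:ℝ)))) = 1 := by
    rw [← Monotone.measure_iUnion (fun a b hab => Set.Iic_subset_Iic.2 (by exact_mod_cast hab)),
      hI, measure_univ]
  have hlt : ENNReal.ofReal v < ⨆ n : ℕ, μ (Set.Iic ((n:ℝ))) := by
    rw [h1]; exact ENNReal.ofReal_lt_one.2 hv
  obtain ⟨n, hn⟩ := lt_iSup_iff.1 hlt
  refine ⟨(n:ℝ), ?_⟩
  have := ENNReal.toReal_mono (measure_ne_top μ _) hn.le
  rcases le_or_gt 0 v with h0 | h0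
  · rwa [ENNReal.toReal_ofReal h0] at this
  · exact h0.le.trans (Fcdf_nonneg μ _)

lemma bddBelow_quantile_set {v : ℝ} (hv : 0 < v) : BddBelow {x | v ≤ Fcdf μ x} := by
  obtain ⟨x₀, hx₀⟩ := exists_cdf_lt μ hv
  refine ⟨x₀, fun s hs => ?_⟩
  by_contra hcon
  push_neg at hcon
  exact absurd hs (not_le.2 (hx₀ s hcon.le))

lemma Fcdf_Finv_ge {v : ℝ} (h0 : 0 < v) (h1 : v < 1) : v ≤ Fcdf μ (Finv μ v) := by
  set S := {x : ℝ | v ≤ Fcdf μ x} with hS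
  have hne : S.Nonempty := exists_cdf_ge μ h1
  have hbdd : BddBelow S := bddBelow_quantile_set μ h0
  have key : ENNReal.ofReal v ≤ μ (Set.Iic (Finv μ v)) := by
    rw [measure_Iic_eq_iInf μ]
    refine le_iInf fun n => ?_
    have hlt : Finv μ v < Finv μ v + ((n:ℝ)+1)⁻¹ := by
      have : (0:ℝ) < ((n:ℝ)+1)⁻¹ := by positivity
      linarith
    obtain ⟨s, hs, hslt⟩ := (csInf_lt_iff hbdd hne).1 hlt
    rw [← ofReal_Fcdf μ]
    exact ENNReal.ofReal_le_ofReal (le_trans hs (Fcdf_mono μ hslt.le))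
  have := ENNReal.toReal_mono (measure_ne_top μ _) key
  rwa [ENNReal.toReal_ofReal h0.le] at this

lemma Fleft_Finv_le {v : ℝ} (h0 : 0 < v) (h1 : v < 1) : Fleft μ (Finv μ v) ≤ v := by
  have hne : Set.Nonempty {x : ℝ | v ≤ Fcdf μ x} := exists_cdf_ge μ h1
  have key : μ (Set.Iio (Finv μ v)) ≤ ENNReal.ofReal v := by
    rw [measure_Iio_eq_iSup μ]
    refine iSup_le fun n => ?_
    have hlt : Finv μ v - ((n:ℝ)+1)⁻¹ < Finv μ v := by
      have : (0:ℝ) < ((n:ℝ)+1)⁻¹ := by positivity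
      linarith
    have hnot : ¬ (v ≤ Fcdf μ (Finv μ v - ((n:ℝ)+1)⁻¹)) := fun hmem =>
      absurd (csInf_le (bddBelow_quantile_set μ h0) hmem) (not_le.2 hlt)
    rw [← ofReal_Fcdf μ]
    exact ENNReal.ofReal_le_ofReal (not_le.1 hnot).le
  have := ENNReal.toReal_mono ENNReal.ofReal_ne_top key
  rwa [ENNReal.toReal_ofReal h0.le] at this

end quantile

section bad
variable (μ : Measure ℝ) [IsProbabilityMeasure μ]

def badSet (μ : Measure ℝ) : Set ℝ :=
  {x | Fcdf μ x = 0} ∪ ⋃ q : ℚ, {x | (q:ℝ) < x ∧ μ (Set.Ioc (q:ℝ) x) = 0}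

lemma badSet_null : μ (badSet μ) = 0 := by
  rw [badSet]
  refine measure_union_null ?_ (measure_iUnion_null fun q => ?_)
  · refine null_of_forall_inter_Iic μ fun x hx => ?_
    have hx0 : μ (Set.Iic x) = 0 := by
      have hfx : Fcdf μ x = 0 := hx
      rw [← ofReal_Fcdf μ x, hfx, ENNReal.ofReal_zero]
    exact measure_mono_null Set.inter_subset_right hx0
  · refine null_of_forall_inter_Iic μ fun x hx => ?_
    refine measure_mono_null (fun y hy => ?_) hx.2
    exact Set.mem_Ioc.2 ⟨hy.1.1, hy.2⟩

lemma not_bad_strict {y x : ℝ} (hx : x ∉ badSet μ) (hyx : y < x)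
    (he : Fcdf μ y = Fcdf μ x) : False := by
  obtain ⟨q, hq1, hq2⟩ := exists_rat_btwn hyx
  have h1 : Fcdf μ y ≤ Fcdf μ q := Fcdf_mono μ hq1.le
  have h2 : Fcdf μ (q:ℝ) ≤ Fcdf μ x := Fcdf_mono μ hq2.le
  have heq : Fcdf μ (q:ℝ) = Fcdf μ x := le_antisymm h2 (he ▸ h1)
  have h0 := Ioc_null_of_cdf_eq μ hq2.le heq
  exact hx (Or.inr (Set.mem_iUnion.2 ⟨q, hq2, h0⟩))

lemma Fcdf_ne_zero_of_not_bad {x : ℝ} (hx : x ∉ badSet μ) : Fcdf μ x ≠ 0 :=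
  fun h => hx (Or.inl h)

end bad


/-- V = Fμ(X-) + U (Fμ(X) - Fμ(X-)) is uniform on [0,1] and Fμ⁻¹(V) = X a.s. -/
theorem stmt6 {Ω : Type*} [MeasurableSpace Ω] (P : Measure Ω) [IsProbabilityMeasure P]
    (μ : Measure ℝ) [IsProbabilityMeasure μ]
    (X U : Ω → ℝ) (hX : Measurable X) (hU : Measurable U)
    (hXlaw : P.map X = μ) (hUlaw : P.map U = volume.restrict (Set.Icc (0:ℝ) 1))
    (hindep : IndepFun X U P)
    (V : Ω → ℝ) (hV : V = fun ω => Fleft μ (X ω) + U ω * (Fcdf μ (X ω) - Fleft μ (X ω))) :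
    P.map V = volume.restrict (Set.Icc (0:ℝ) 1) ∧ ∀ᵐ ω ∂P, Finv μ (V ω) = X ω := by
  have hVω : ∀ ω, V ω = Fleft μ (X ω) + U ω * (Fcdf μ (X ω) - Fleft μ (X ω)) := fun ω => by
    rw [hV]
  have hVmeas : Measurable V := by
    rw [hV]
    exact ((measurable_Fleft μ).comp hX).add
      (hU.mul (((measurable_Fcdf μ).comp hX).sub ((measurable_Fleft μ).comp hX)))
  have hXs : ∀ s : Set ℝ, MeasurableSet s → P (X ⁻¹' s) = μ s := fun s hs => by
    rw [← hXlaw, Measure.map_apply hX hs]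
  have hUs : ∀ s : Set ℝ, MeasurableSet s → P (U ⁻¹' s) = volume (s ∩ Set.Icc 0 1) :=
    fun s hs => by
      rw [← Measure.map_apply hU hs, hUlaw, Measure.restrict_apply hs]
  -- a.e. facts
  have hU01 : ∀ᵐ ω ∂P, 0 < U ω ∧ U ω ≤ 1 := by
    rw [ae_iff]
    have hsub : {ω | ¬(0 < U ω ∧ U ω ≤ 1)} ⊆ U ⁻¹' (Set.Ioc (0:ℝ) 1)ᶜ := by
      intro ω hω
      simp only [Set.mem_setOf_eq, not_and, not_le] at hω
      simp only [Set.mem_preimage, Set.mem_compl_iff, Set.mem_Ioc, not_and, not_le]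
      exact hω
    refine measure_mono_null hsub ?_
    rw [hUs _ measurableSet_Ioc.compl]
    have hns : (Set.Ioc (0:ℝ) 1)ᶜ ∩ Set.Icc 0 1 ⊆ {(0:ℝ)} := by
      rintro u ⟨h1, h2a, h2b⟩
      simp only [Set.mem_compl_iff, Set.mem_Ioc, not_and, not_le] at h1
      have h0 : u = 0 := by
        by_contra hne
        have hpos : 0 < u := lt_of_le_of_ne h2a (Ne.symm hne)
        exact absurd (h1 hpos) (not_lt.2 h2b)
      simp [h0]
    exact measure_mono_null hns Real.volume_singleton
  obtain ⟨A, hAsub, hAmeas, hA0⟩ := exists_measurable_superset_of_null (badSet_null μ)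
  have hXA : ∀ᵐ ω ∂P, X ω ∉ badSet μ := by
    rw [ae_iff]
    have hPA : P (X ⁻¹' A) = 0 := by rw [hXs A hAmeas, hA0]
    refine measure_mono_null (fun ω hω => ?_) hPA
    simp only [Set.mem_setOf_eq, not_not] at hω
    exact hAsub hω
  -- pointwise bounds on V
  have hVb : ∀ ω, 0 < U ω → U ω ≤ 1 → X ω ∉ badSet μ →
      Fleft μ (X ω) ≤ V ω ∧ V ω ≤ Fcdf μ (X ω) ∧ 0 < V ω := by
    intro ω hu0 hu1 hxA
    have hlf : Fleft μ (X ω) ≤ Fcdf μ (X ω) := Fleft_le_Fcdf μ _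
    have hl0 : 0 ≤ Fleft μ (X ω) := Fleft_nonneg μ _
    have hfpos : 0 < Fcdf μ (X ω) :=
      lt_of_le_of_ne (Fcdf_nonneg μ _) (Ne.symm (Fcdf_ne_zero_of_not_bad μ hxA))
    rw [hVω ω]
    refine ⟨by nlinarith, by nlinarith, by nlinarith⟩
  -- part 2
  have part2 : ∀ᵐ ω ∂P, Finv μ (V ω) = X ω := by
    filter_upwards [hU01, hXA] with ω hu hxA
    obtain ⟨hge, hle, hpos⟩ := hVb ω hu.1 hu.2 hxA
    have hS : X ω ∈ {y : ℝ | V ω ≤ Fcdf μ y} := hle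
    have hbdd : BddBelow {y : ℝ | V ω ≤ Fcdf μ y} := bddBelow_quantile_set μ hpos
    refine le_antisymm (csInf_le hbdd hS) (le_csInf ⟨X ω, hS⟩ fun y hy => ?_)
    by_contra hyx
    push_neg at hyx
    have h1 : Fcdf μ y ≤ Fleft μ (X ω) := Fcdf_le_Fleft_of_lt μ hyx
    have hy' : V ω ≤ Fcdf μ y := hy
    have hw : V ω = Fleft μ (X ω) := le_antisymm (hy'.trans h1) hge
    have hΔ : Fcdf μ (X ω) = Fleft μ (X ω) := by
      have hVe := hVω ω
      have hmul : U ω * (Fcdf μ (X ω) - Fleft μ (X ω)) = 0 := by linarith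
      rcases mul_eq_zero.1 hmul with h | h
      · exact absurd h (ne_of_gt hu.1)
      · linarith
    have h2 : Fcdf μ y = Fleft μ (X ω) := le_antisymm h1 (by rw [← hw]; exact hy')
    have heq : Fcdf μ y = Fcdf μ (X ω) := by rw [h2, hΔ]
    exact not_bad_strict μ hxA hyx heq
  refine ⟨?_, part2⟩
  -- part 1
  haveI : IsProbabilityMeasure (P.map V) := Measure.isProbabilityMeasure_map hVmeas.aemeasurable
  refine Measure.ext_of_Iic (P.map V) _ fun v => ?_
  rw [Measure.map_apply hVmeas measurableSet_Iic, Measure.restrict_apply measurableSet_Iic]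
  rcases le_or_gt v 0 with hv0 | hv0
  · -- v ≤ 0
    have hL : P (V ⁻¹' Set.Iic v) = 0 := by
      have hae : ∀ᵐ ω ∂P, ¬ (V ω ≤ v) := by
        filter_upwards [hU01, hXA] with ω hu hxA
        have := (hVb ω hu.1 hu.2 hxA).2.2
        intro hcon; linarith
      have h0 := ae_iff.1 hae
      simp only [not_not] at h0
      exact h0
    rw [hL]
    symm
    refine measure_mono_null (fun x hx => ?_) (Real.volume_singleton (a := v))
    rcases hx with ⟨h1, h2, h3⟩
    have : x = v := le_antisymm h1 (by linarith)
    simp [this]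
  rcases le_or_gt 1 v with hv1 | hv1
  · -- 1 ≤ v
    have hR : Set.Iic v ∩ Set.Icc (0:ℝ) 1 = Set.Icc 0 1 :=
      Set.inter_eq_right.2 fun x hx => le_trans hx.2 hv1
    rw [hR, Real.volume_Icc]
    norm_num
    have hae : ∀ᵐ ω ∂P, V ω ≤ v := by
      filter_upwards [hU01, hXA] with ω hu hxA
      have h2 := (hVb ω hu.1 hu.2 hxA).2.1
      have h3 := Fcdf_le_one μ (X ω)
      linarith
    have hc : P (V ⁻¹' Set.Iic v)ᶜ = 0 := ae_iff.1 hae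
    exact (prob_compl_eq_zero_iff (hVmeas measurableSet_Iic)).1 hc
  · -- 0 < v < 1
    have ha : Fleft μ (Finv μ v) ≤ v := Fleft_Finv_le μ hv0 hv1
    have hb : v ≤ Fcdf μ (Finv μ v) := Fcdf_Finv_ge μ hv0 hv1
    have hab : Fleft μ (Finv μ v) ≤ Fcdf μ (Finv μ v) := Fleft_le_Fcdf μ _
    set x' : ℝ := Finv μ v with hx'
    set c : ℝ := if Fcdf μ x' = Fleft μ x' then 1
      else (v - Fleft μ x') / (Fcdf μ x' - Fleft μ x') with hcdef
    have hc0 : 0 ≤ c := by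
      rw [hcdef]; split
      · norm_num
      · next h =>
        have hba : Fleft μ x' < Fcdf μ x' := lt_of_le_of_ne hab (Ne.symm h)
        exact div_nonneg (by linarith) (by linarith)
    have hc1 : c ≤ 1 := by
      rw [hcdef]; split
      · norm_num
      · next h =>
        have hba : Fleft μ x' < Fcdf μ x' := lt_of_le_of_ne hab (Ne.symm h)
        rw [div_le_one (by linarith)]
        linarith
    have hkey : (Fcdf μ x' - Fleft μ x') * c = v - Fleft μ x' := by
      rw [hcdef]; split
      · next h =>
        have hva : v = Fleft μ x' := le_antisymm (by rw [← h]; exact hb) ha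
        rw [h, ← hva]; ring
      · next h =>
        have hba : Fleft μ x' < Fcdf μ x' := lt_of_le_of_ne hab (Ne.symm h)
        rw [mul_comm (Fcdf μ x' - Fleft μ x')]
        exact div_mul_cancel₀ _ (sub_ne_zero.2 (ne_of_gt hba))
    -- pointwise characterization
    have hiff : ∀ ω, (0 < U ω ∧ U ω ≤ 1) → X ω ∉ badSet μ →
        (V ω ≤ v ↔ (X ω < x' ∨ (X ω = x' ∧ U ω ≤ c))) := by
      intro ω hu hxA
      obtain ⟨hge, hle, hpos⟩ := hVb ω hu.1 hu.2 hxA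
      constructor
      · intro hVv
        rcases lt_trichotomy (X ω) x' with hlt | heq | hgt
        · exact Or.inl hlt
        · refine Or.inr ⟨heq, ?_⟩
          have hVeq : V ω = Fleft μ x' + U ω * (Fcdf μ x' - Fleft μ x') := by
            rw [hVω ω, heq]
          by_cases hba : Fcdf μ x' = Fleft μ x'
          · rw [hcdef]; simp only [hba, if_true]; exact hu.2
          · have hba' : Fleft μ x' < Fcdf μ x' := lt_of_le_of_ne hab (Ne.symm hba)
            rw [hcdef]; simp only [hba, if_false]
            rw [le_div_iff₀ (by linarith)]
            nlinarith
        · exfalso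
          have h1 : Fcdf μ x' ≤ Fleft μ (X ω) := Fcdf_le_Fleft_of_lt μ hgt
          have hflv : Fleft μ (X ω) = v := by linarith
          have hbv : Fcdf μ x' = v := by linarith
          have hVe := hVω ω
          have hmul : U ω * (Fcdf μ (X ω) - Fleft μ (X ω)) = 0 :=
            le_antisymm (by linarith)
              (mul_nonneg hu.1.le (sub_nonneg.2 (Fleft_le_Fcdf μ (X ω))))
          have hΔ : Fcdf μ (X ω) = Fleft μ (X ω) := by
            rcases mul_eq_zero.1 hmul with h | h
            · exact absurd h (ne_of_gt hu.1)
            · linarith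
          have heq2 : Fcdf μ x' = Fcdf μ (X ω) := by rw [hΔ, hflv]; exact hbv
          exact not_bad_strict μ hxA hgt heq2
      · rintro (hlt | ⟨heq, huc⟩)
        · have hFlt : Fcdf μ (X ω) < v := by
            by_contra hge2
            push_neg at hge2
            have hle2 : Finv μ v ≤ X ω := csInf_le (bddBelow_quantile_set μ hv0) hge2
            rw [← hx'] at hle2
            exact absurd hle2 (not_le.2 hlt)
          linarith
        · have hVeq : V ω = Fleft μ x' + U ω * (Fcdf μ x' - Fleft μ x') := by
            rw [hVω ω, heq]
          have hmul : U ω * (Fcdf μ x' - Fleft μ x') ≤ c * (Fcdf μ x' - Fleft μ x') := by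
            have hx'sub : Fleft μ x' ≤ Fcdf μ x' := hab
            exact mul_le_mul_of_nonneg_right huc (by linarith)
          have : c * (Fcdf μ x' - Fleft μ x') = v - Fleft μ x' := by
            rw [mul_comm]; exact hkey
          linarith
    -- measure computation
    have hsetseq : ∀ᵐ ω ∂P, (ω ∈ V ⁻¹' Set.Iic v ↔
        ω ∈ (X ⁻¹' Set.Iio x' ∪ (X ⁻¹' {x'} ∩ U ⁻¹' Set.Iic c))) := by
      filter_upwards [hU01, hXA] with ω hu hxA
      simp only [Set.mem_preimage, Set.mem_Iic, Set.mem_union, Set.mem_inter_iff,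
        Set.mem_Iio, Set.mem_singleton_iff]
      exact hiff ω hu hxA
    have hPeq := measure_congr (μ := P) (Filter.eventuallyEq_set.2 hsetseq)
    rw [hPeq]
    have hdisj : Disjoint (X ⁻¹' Set.Iio x') (X ⁻¹' {x'} ∩ U ⁻¹' Set.Iic c) := by
      refine Set.disjoint_left.2 fun ω h1 h2 => ?_
      have hlt : X ω < x' := h1
      have heq : X ω = x' := h2.1
      exact absurd heq (ne_of_lt hlt)
    rw [measure_union hdisj ((hX (measurableSet_singleton x')).inter (hU measurableSet_Iic))]
    rw [hindep.measure_inter_preimage_eq_mul _ _ (measurableSet_singleton x') measurableSet_Iic]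
    rw [hXs _ measurableSet_Iio, hXs _ (measurableSet_singleton x'), hUs _ measurableSet_Iic]
    have h1 : μ (Set.Iio x') = ENNReal.ofReal (Fleft μ x') := (ofReal_Fleft μ x').symm
    have h2 : μ {x'} = ENNReal.ofReal (Fcdf μ x' - Fleft μ x') := by
      have hsplit : μ (Set.Iio x') + μ {x'} = μ (Set.Iic x') := by
        rw [← measure_union (by simp) (measurableSet_singleton x'), Set.Iio_union_right]
      rw [h1, ← ofReal_Fcdf μ x'] at hsplit
      have hadd : ENNReal.ofReal (Fleft μ x') + ENNReal.ofReal (Fcdf μ x' - Fleft μ x')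
          = ENNReal.ofReal (Fcdf μ x') := by
        rw [← ENNReal.ofReal_add (Fleft_nonneg μ x') (by linarith)]
        ring_nf
      rw [← hadd] at hsplit
      exact (ENNReal.add_right_inj ENNReal.ofReal_ne_top).1 hsplit
    have h3 : volume (Set.Iic c ∩ Set.Icc (0:ℝ) 1) = ENNReal.ofReal c := by
      have hseq : Set.Iic c ∩ Set.Icc (0:ℝ) 1 = Set.Icc 0 c := by
        ext u
        simp only [Set.mem_inter_iff, Set.mem_Iic, Set.mem_Icc]
        constructor
        · rintro ⟨hu1, hu2, hu3⟩; exact ⟨hu2, hu1⟩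
        · rintro ⟨hu1, hu2⟩; exact ⟨hu2, hu1, hu2.trans hc1⟩
      rw [hseq, Real.volume_Icc, sub_zero]
    have h4 : Set.Iic v ∩ Set.Icc (0:ℝ) 1 = Set.Icc 0 v := by
      ext u
      simp only [Set.mem_inter_iff, Set.mem_Iic, Set.mem_Icc]
      constructor
      · rintro ⟨hu1, hu2, hu3⟩; exact ⟨hu2, hu1⟩
      · rintro ⟨hu1, hu2⟩; exact ⟨hu2, hu1, hu2.trans hv1.le⟩
    rw [h1, h2, h3, h4, Real.volume_Icc, sub_zero]
    rw [← ENNReal.ofReal_mul (by linarith)]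
    rw [hkey]
    rw [← ENNReal.ofReal_add (Fleft_nonneg μ x') (by linarith)]
    ring_nf
end
end

section
/- Let ν be a probability measure on ℝ^d with ∫|y| dν(y) < ∞ and φ : ℝ^d → ℝ a convex function with ∫φ(y) dν(y) < ∞. Then the family of pushforward measures {φ#η : η ≤_cx ν} is uniformly integrable, i.e., sup over η ≤_cx ν of ∫ φ(x) 1_{φ(x) ≥ M} dη(x) tends to 0 as M → ∞. -/
open MeasureTheory ProbabilityTheory Set Filter
open scoped ENNReal BoundedContinuousFunction

noncomputable section

/-- Uniform integrability of {φ#η : η ≤cx ν}. -/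
theorem stmt8 {d : ℕ} (ν : Measure (Ed d)) [IsProbabilityMeasure ν]
    (hν1 : Integrable (fun y => ‖y‖) ν)
    (φ : Ed d → ℝ) (hφ : ConvexOn ℝ Set.univ φ) (hφν : Integrable φ ν) :
    ∀ ε > (0:ℝ), ∃ M : ℝ, 0 < M ∧
      ∀ η : Measure (Ed d), IsProbabilityMeasure η → ConvexOrder η ν →
        ∫ x in {x | M ≤ φ x}, φ x ∂η ≤ ε := by
  intro ε hε
  have hφc : Continuous φ := by
    exact continuousOn_univ.mp (hφ.continuousOn isOpen_univ)
  -- ψ c = (φ - c)⁺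
  set ψ : ℝ → Ed d → ℝ := fun c x => max (φ x - c) 0 with hψdef
  have hψconv : ∀ c : ℝ, ConvexOn ℝ Set.univ (ψ c) := by
    intro c
    exact (hφ.sub (concaveOn_const c convex_univ)).sup (convexOn_const 0 convex_univ)
  have hψcont : ∀ c : ℝ, Continuous (ψ c) := fun c =>
    (hφc.sub continuous_const).max continuous_const
  have hψnn : ∀ c x, 0 ≤ ψ c x := fun c x => le_max_right _ _
  have hψabs : ∀ (c : ℝ) x, 0 ≤ c → ψ c x ≤ |φ x| := by
    intro c x hc
    refine max_le ?_ (abs_nonneg _)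
    have := le_abs_self (φ x)
    linarith
  have hψν : ∀ c : ℝ, 0 ≤ c → Integrable (ψ c) ν := by
    intro c hc
    refine hφν.mono (hψcont c).aestronglyMeasurable (Filter.Eventually.of_forall fun x => ?_)
    rw [Real.norm_eq_abs, abs_of_nonneg (hψnn c x), Real.norm_eq_abs]
    exact hψabs c x hc
  -- ∫ ψ n dν → 0
  have htend : Tendsto (fun n : ℕ => ∫ x, ψ n x ∂ν) atTop (nhds 0) := by
    have h0 : (0:ℝ) = ∫ x, (0:ℝ) ∂ν := by simp
    rw [h0]
    refine tendsto_integral_of_dominated_convergence (fun x => |φ x|)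
      (fun n => (hψcont n).aestronglyMeasurable) hφν.abs
      (fun n => Filter.Eventually.of_forall fun x => ?_)
      (Filter.Eventually.of_forall fun x => ?_)
    · rw [Real.norm_eq_abs, abs_of_nonneg (hψnn _ x)]
      exact hψabs _ x (Nat.cast_nonneg n)
    · have : ∀ᶠ n : ℕ in atTop, ψ n x = 0 := by
        filter_upwards [eventually_ge_atTop (Nat.ceil (φ x))] with n hn
        have : φ x - (n:ℝ) ≤ 0 := by
          have := Nat.le_ceil (φ x)
          have : (φ x) ≤ (n:ℝ) := this.trans (by exact_mod_cast hn)
          linarith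
        simp [hψdef, max_eq_right this]
      exact Tendsto.congr' (Filter.EventuallyEq.symm this) tendsto_const_nhds
  -- choose c
  obtain ⟨n, hn1, hnε⟩ : ∃ n : ℕ, 1 ≤ n ∧ ∫ x, ψ n x ∂ν ≤ ε / 2 := by
    have h1 : ∀ᶠ n : ℕ in atTop, ∫ x, ψ n x ∂ν ≤ ε / 2 := by
      filter_upwards [htend.eventually (eventually_le_nhds (by linarith : (0:ℝ) < ε/2))] with n hn
      exact hn
    obtain ⟨n, hn, hn'⟩ := (eventually_ge_atTop 1).and h1 |>.exists
    exact ⟨n, hn, hn'⟩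
  set c : ℝ := (n : ℝ) with hc
  have hcpos : (0:ℝ) < c := by
    have : (1:ℝ) ≤ c := by rw [hc]; exact_mod_cast hn1
    linarith
  refine ⟨2 * c, by linarith, ?_⟩
  intro η hηP hηcx
  set s : Set (Ed d) := {x | 2 * c ≤ φ x} with hs
  have hsm : MeasurableSet s := measurableSet_le measurable_const hφc.measurable
  by_cases hInt : IntegrableOn φ s η
  · -- ψ c integrable under η
    have hψη : Integrable (ψ c) η := by
      have hg : Integrable (fun x => 2 * c + s.indicator (fun x => |φ x|) x) η :=
        (integrable_const (2 * c)).add (IntegrableOn.integrable_indicator hInt.abs hsm)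
      refine hg.mono (hψcont c).aestronglyMeasurable (Filter.Eventually.of_forall fun x => ?_)
      have hind : 0 ≤ s.indicator (fun x => |φ x|) x :=
        Set.indicator_nonneg (fun x _ => abs_nonneg _) x
      rw [Real.norm_eq_abs, abs_of_nonneg (hψnn c x), Real.norm_eq_abs,
        abs_of_nonneg (by linarith : (0:ℝ) ≤ 2 * c + s.indicator (fun x => |φ x|) x)]
      rcases le_or_gt (2 * c) (φ x) with h | h
      · have hxs : x ∈ s := h
        rw [Set.indicator_of_mem hxs]
        have : ψ c x ≤ φ x := by
          rcases le_or_gt (φ x - c) 0 with h' | h'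
          · rw [hψdef]; simp only; rw [max_eq_right h']; linarith
          · rw [hψdef]; simp only; rw [max_eq_left h'.le]; linarith
        calc ψ c x ≤ φ x := this
          _ ≤ |φ x| := le_abs_self _
          _ ≤ 2 * c + |φ x| := by linarith
      · rw [Set.indicator_of_notMem (by simpa [hs] using h)]
        rcases le_or_gt (φ x - c) 0 with h' | h'
        · rw [hψdef]; simp only; rw [max_eq_right h']; linarith
        · rw [hψdef]; simp only; rw [max_eq_left h'.le]; linarith
    have hkey : ∫ x, ψ c x ∂η ≤ ∫ y, ψ c y ∂ν :=
      hηcx (ψ c) (hψconv c) hψη (hψν c hcpos.le)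
    have h2 : ∫ x in s, φ x ∂η ≤ ∫ x in s, 2 * ψ c x ∂η := by
      refine setIntegral_mono_on hInt ((hψη.const_mul 2).integrableOn) hsm ?_
      intro x hx
      have hx' : 2 * c ≤ φ x := hx
      have : φ x - c ≥ 0 := by linarith
      rw [hψdef]; simp only; rw [max_eq_left this]; linarith
    have h3 : ∫ x in s, 2 * ψ c x ∂η ≤ ∫ x, 2 * ψ c x ∂η := by
      refine setIntegral_le_integral (hψη.const_mul 2) (Filter.Eventually.of_forall fun x => ?_)
      have := hψnn c x
      simp only [Pi.zero_apply]
      linarith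
    calc ∫ x in s, φ x ∂η ≤ ∫ x in s, 2 * ψ c x ∂η := h2
      _ ≤ ∫ x, 2 * ψ c x ∂η := h3
      _ = 2 * ∫ x, ψ c x ∂η := integral_const_mul 2 _
      _ ≤ 2 * (ε / 2) := by
        have : ∫ x, ψ c x ∂η ≤ ε / 2 := hkey.trans hnε
        linarith
      _ = ε := by ring
  · rw [integral_undef hInt]
    exact hε.le
end
end

section
/- Let ν be a probability measure on ℝ^d with ∫|y| dν(y) < ∞, let φ : ℝ^d → ℝ₊ be a nonnegative convex function with ∫φ dν < ∞, and let η ≤_cx ν. Then for every M > 0, ∫ φ(x) 1_{φ(x) ≥ M} dη(x) ≤ ∫ φ(y) 1_{φ(y) ≥ √M} dν(y) + (1/√M) ∫ φ(y) dν(y). -/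
open MeasureTheory ProbabilityTheory Set Filter
open scoped ENNReal BoundedContinuousFunction

noncomputable section

/-!
With `s = √M`, split `φ ≤ (φ - s)⁺ + s`. The convex function `(φ - s)⁺` has `η`-integral at most
its `ν`-integral, which is bounded by `∫_{φ ≥ s} φ dν`; the constant `s` contributes
`s · η{φ ≥ M} ≤ (1/s) ∫ φ dη ≤ (1/s) ∫ φ dν` by Markov's inequality and the convex order.
-/

section PositivePartTail

variable {α : Type*} [MeasurableSpace α] {μ : Measure α} {f : α → ℝ}

lemma integrable_posPart_sub (hf : Integrable f μ) {s : ℝ} (hs : 0 ≤ s) :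
    Integrable (fun x => max (f x - s) 0) μ := by
  refine hf.norm.mono' ((hf.aestronglyMeasurable.sub aestronglyMeasurable_const).sup
    aestronglyMeasurable_const) (Eventually.of_forall fun x => ?_)
  rw [Real.norm_eq_abs, Real.norm_eq_abs, abs_of_nonneg (le_max_right _ _)]
  exact max_le (by linarith [le_abs_self (f x)]) (abs_nonneg _)

lemma integral_posPart_sub_le_setIntegral (hf : Integrable f μ) (hfm : Measurable f)
    {s : ℝ} (hs : 0 ≤ s) :
    ∫ x, max (f x - s) 0 ∂μ ≤ ∫ x in {x | s ≤ f x}, f x ∂μ := by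
  have hset : MeasurableSet {x | s ≤ f x} := hfm measurableSet_Ici
  rw [← integral_indicator hset]
  refine integral_mono (integrable_posPart_sub hf hs) (hf.indicator hset) fun x => ?_
  by_cases hx : s ≤ f x
  · simp only [indicator_of_mem (show x ∈ {x | s ≤ f x} from hx)]
    exact max_le (by linarith) (hs.trans hx)
  · simp [indicator_of_notMem (show x ∉ {x | s ≤ f x} from hx), (not_le.mp hx).le]

lemma setIntegral_le_integral_posPart_sub_add [IsFiniteMeasure μ] (hf : Integrable f μ)
    {s : ℝ} (hs : 0 ≤ s) (t : ℝ) :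
    ∫ x in {x | t ≤ f x}, f x ∂μ ≤
      ∫ x, max (f x - s) 0 ∂μ + s * μ.real {x | t ≤ f x} := by
  set A := {x | t ≤ f x}
  have hψ := integrable_posPart_sub hf hs
  calc ∫ x in A, f x ∂μ ≤ ∫ x in A, (max (f x - s) 0 + s) ∂μ :=
        setIntegral_mono hf.integrableOn (hψ.add (integrable_const s)).integrableOn
          fun x => by linarith [le_max_left (f x - s) 0]
    _ = ∫ x in A, max (f x - s) 0 ∂μ + s * μ.real A := by
        rw [integral_add hψ.integrableOn (integrable_const s), setIntegral_const, smul_eq_mul,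
          mul_comm]
    _ ≤ ∫ x, max (f x - s) 0 ∂μ + s * μ.real A :=
        add_le_add_left (setIntegral_le_integral hψ
          (Eventually.of_forall fun x => le_max_right _ _)) _

lemma integrable_of_integrableOn_setOf_le [IsFiniteMeasure μ] (hfm : Measurable f)
    (hf0 : 0 ≤ f) {t : ℝ} (ht : IntegrableOn f {x | t ≤ f x} μ) : Integrable f μ := by
  have hbelow : IntegrableOn f {x | t ≤ f x}ᶜ μ := by
    refine Measure.integrableOn_of_bounded (measure_ne_top _ _) hfm.aestronglyMeasurable
      (M := t) ?_
    filter_upwards [ae_restrict_mem (hfm measurableSet_Ici).compl] with x hx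
    simp only [mem_compl_iff, mem_ofPred_eq, not_le] at hx
    rw [Real.norm_eq_abs, abs_of_nonneg (hf0 x)]
    exact hx.le
  simpa using ht.union hbelow

lemma sqrt_mul_measureReal_setOf_le_le (hf : Integrable f μ) (hf0 : 0 ≤ f) {M : ℝ}
    (hM : 0 < M) :
    Real.sqrt M * μ.real {x | M ≤ f x} ≤ (1 / Real.sqrt M) * ∫ x, f x ∂μ := by
  have hs : 0 < Real.sqrt M := Real.sqrt_pos.mpr hM
  have markov := mul_meas_ge_le_integral_of_nonneg (Eventually.of_forall hf0) hf M
  rw [one_div_mul_eq_div, le_div_iff₀ hs, mul_right_comm, Real.mul_self_sqrt hM.le]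
  exact markov

end PositivePartTail

theorem stmt9_general {d : ℕ} (ν : Measure (Ed d))
    (φ : Ed d → ℝ) (hφ : ConvexOn ℝ Set.univ φ) (hφpos : ∀ x, 0 ≤ φ x)
    (hφν : Integrable φ ν)
    (η : Measure (Ed d)) [IsProbabilityMeasure η] (hcx : ConvexOrder η ν)
    (M : ℝ) (hM : 0 < M) :
    ∫ x in {x | M ≤ φ x}, φ x ∂η ≤
      ∫ y in {y | Real.sqrt M ≤ φ y}, φ y ∂ν + (1 / Real.sqrt M) * ∫ y, φ y ∂ν := by
  set s := Real.sqrt M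
  have hs : 0 ≤ s := Real.sqrt_nonneg M
  have hφm : Measurable φ := (continuousOn_univ.mp (hφ.continuousOn isOpen_univ)).measurable
  by_cases hInt : IntegrableOn φ {x | M ≤ φ x} η
  swap
  · -- the Bochner integral of a non-integrable function is `0`
    rw [integral_undef hInt]
    exact add_nonneg (setIntegral_nonneg (hφm measurableSet_Ici) fun y _ => hφpos y)
      (mul_nonneg (by positivity) (integral_nonneg hφpos))
  have hφη := integrable_of_integrableOn_setOf_le hφm hφpos hInt
  have hψ : ConvexOn ℝ univ fun x => max (φ x - s) 0 :=
    (hφ.sub (concaveOn_const s convex_univ)).sup (convexOn_const 0 convex_univ)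
  calc ∫ x in {x | M ≤ φ x}, φ x ∂η
      ≤ ∫ x, max (φ x - s) 0 ∂η + s * η.real {x | M ≤ φ x} :=
        setIntegral_le_integral_posPart_sub_add hφη hs M
    _ ≤ ∫ y, max (φ y - s) 0 ∂ν + (1 / s) * ∫ x, φ x ∂η :=
        add_le_add (hcx _ hψ (integrable_posPart_sub hφη hs) (integrable_posPart_sub hφν hs))
          (sqrt_mul_measureReal_setOf_le_le hφη hφpos hM)
    _ ≤ ∫ y in {y | s ≤ φ y}, φ y ∂ν + (1 / s) * ∫ y, φ y ∂ν :=
        add_le_add (integral_posPart_sub_le_setIntegral hφν hφm hs)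
          (mul_le_mul_of_nonneg_left (hcx φ hφ hφη hφν) (by positivity))

/-- Quantitative uniform-integrability bound for nonnegative convex φ and η ≤cx ν. -/
theorem stmt9 {d : ℕ} (ν : Measure (Ed d)) [IsProbabilityMeasure ν]
    (hν1 : Integrable (fun y => ‖y‖) ν)
    (φ : Ed d → ℝ) (hφ : ConvexOn ℝ Set.univ φ) (hφpos : ∀ x, 0 ≤ φ x)
    (hφν : Integrable φ ν)
    (η : Measure (Ed d)) [IsProbabilityMeasure η] (hcx : ConvexOrder η ν)
    (M : ℝ) (hM : 0 < M) :
    ∫ x in {x | M ≤ φ x}, φ x ∂η ≤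
      ∫ y in {y | Real.sqrt M ≤ φ y}, φ y ∂ν + (1 / Real.sqrt M) * ∫ y, φ y ∂ν :=
  stmt9_general ν φ hφ hφpos hφν η hcx M hM
end
end
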